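/- arXiv:1410.5061 — 10 statements merged into one kernel-verified Lean document; each statement's English description precedes it below -/
import Mathlib

section
/- Let H be a real Hilbert space, E a nonempty closed convex subset of H, and f : E × E → ℝ a bifunction satisfying conditions (A1)–(A4). Let S : H → H be an (α, β)-generalized hybrid mapping such that F(S) ∩ EP(f) ≠ ∅. Let a ∈ (0,1] and let {α_n} be a sequence with 0 < a ≤ α_n ≤ 1 for all n, let {r_n} ⊂ (0,∞) satisfy liminf_{n→∞} r_n > 0, and let {β_n} be a sequence in [b,1] for some b ∈ (0,1) with liminf_{n→∞} β_n(1−β_n) > 0. Let x_1 = x ∈ H and let {x_n} ⊂ H, {u_n} ⊂ E, {y_n} ⊂ H satisfy, for all n ∈ ℕ: f(u_n, y) + (1/r_n)⟨y − u_n, u_n − x_n⟩ ≥ 0 for all y ∈ E; y_n = (1−β_n)x_n + β_n S u_n; and x_{n+1} = (1−α_n)x_n + α_n S y_n. Then {x_n} converges weakly to a point v ∈ F(S) ∩ EP(f), and moreover v = lim_{n→∞} P_{F(S)∩EP(f)}(x_n), where P_{F(S)∩EP(f)} denotes the metric projection of H onto F(S) ∩ EP(f). -/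
open Filter Function RealInnerProductSpace
open scoped Topology

/-!
A generalized hybrid map is quasi-nonexpansive, and the resolvent step `x n ↦ u n` satisfies
`‖u n - q‖² + ‖u n - x n‖² ≤ ‖x n - q‖²` for every solution `q` of the equilibrium problem. So for
every `q ∈ K` the Ishikawa step decreases `‖x n - q‖²` by at least
`c (‖u n - x n‖² + ‖x n - S (u n)‖²)`: the sequence is Fejér monotone with respect to `K`, and
`‖u n - x n‖ → 0`, `‖S (u n) - u n‖ → 0`. A weak cluster point of `(x n)` (a limit along an
ultrafilter, produced by the Riesz representation) is then also one of `(u n)`; demiclosedness of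
`I - S` and Minty's lemma put it in `K`, and Opial's argument shows there is only one. Finally the
projections of a Fejér monotone sequence onto `K` form a Cauchy sequence, and the variational
inequality of the projection identifies their limit with the weak limit.
-/

theorem tendsto_zero_of_mul_sq_le_sub_succ {d c e : ℕ → ℝ} {L κ : ℝ}
    (hd : Tendsto d atTop (𝓝 L)) (hκ : 0 < κ) (hc : ∀ᶠ n in atTop, κ ≤ c n)
    (he : ∀ n, 0 ≤ e n) (h : ∀ n, c n * e n ^ 2 ≤ d n - d (n + 1)) :
    Tendsto e atTop (𝓝 0) := by
  have hgap : Tendsto (fun n => (d n - d (n + 1)) / κ) atTop (𝓝 0) := by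
    simpa using (hd.sub (hd.comp (tendsto_add_atTop_nat 1))).div_const κ
  have hsq : Tendsto (fun n => e n ^ 2) atTop (𝓝 0) :=
    squeeze_zero' (Eventually.of_forall fun n => sq_nonneg _)
      (hc.mono fun n hn => (le_div_iff₀ hκ).2 (by nlinarith [h n, sq_nonneg (e n)])) hgap
  simpa [Real.sqrt_sq (he _)] using hsq.sqrt

theorem LowerSemicontinuousOn.isClosed_inter_preimage_Iic {X : Type*} [TopologicalSpace X]
    {g : X → ℝ} {s : Set X} (hg : LowerSemicontinuousOn g s) (hs : IsClosed s) (c : ℝ) :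
    IsClosed (s ∩ g ⁻¹' Set.Iic c) := by
  obtain ⟨t, ht, hst⟩ := lowerSemicontinuousOn_iff_preimage_Iic.1 hg c
  exact hst ▸ hs.inter ht

section Hilbert

variable {H : Type*} [NormedAddCommGroup H] [InnerProductSpace ℝ H]

def WeakTendsto {ι : Type*} (x : ι → H) (l : Filter ι) (v : H) : Prop :=
  ∀ w, Tendsto (fun n => ⟪x n, w⟫) l (𝓝 ⟪v, w⟫)

theorem norm_convexComb_sub_sq (z₁ z₂ y : H) (t : ℝ) :
    ‖(1 - t) • z₁ + t • z₂ - y‖ ^ 2 =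
      (1 - t) * ‖z₁ - y‖ ^ 2 + t * ‖z₂ - y‖ ^ 2 - t * (1 - t) * ‖z₁ - z₂‖ ^ 2 := by
  have hsplit : (1 - t) • z₁ + t • z₂ - y = (1 - t) • (z₁ - y) + t • (z₂ - y) := by module
  have hdiff : z₁ - z₂ = (z₁ - y) - (z₂ - y) := by abel
  rw [hsplit, hdiff]
  generalize z₁ - y = a
  generalize z₂ - y = b
  rw [norm_add_sq_real, norm_sub_sq_real, norm_smul, norm_smul, real_inner_smul_left,
    real_inner_smul_right, mul_pow, mul_pow, Real.norm_eq_abs, Real.norm_eq_abs, sq_abs, sq_abs]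
  ring

theorem tendsto_inner_zero_of_norm_le {ι : Type*} {l : Filter ι} {a e : ι → H} {R : ℝ}
    (ha : ∀ n, ‖a n‖ ≤ R) (he : Tendsto (fun n => ‖e n‖) l (𝓝 0)) :
    Tendsto (fun n => ⟪a n, e n⟫) l (𝓝 0) := by
  refine squeeze_zero_norm (fun n => ?_) (by simpa using he.const_mul R)
  exact (abs_real_inner_le_norm _ _).trans
    (mul_le_mul_of_nonneg_right (ha n) (norm_nonneg _))

theorem tendsto_norm_add_sq_sub_norm_sq {ι : Type*} {l : Filter ι} {a e : ι → H} {R : ℝ}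
    (ha : ∀ n, ‖a n‖ ≤ R) (he : Tendsto (fun n => ‖e n‖) l (𝓝 0)) :
    Tendsto (fun n => ‖a n + e n‖ ^ 2 - ‖a n‖ ^ 2) l (𝓝 0) := by
  have hlim := ((tendsto_inner_zero_of_norm_le ha he).const_mul 2).add (he.pow 2)
  simp only [mul_zero, ne_eq, OfNat.ofNat_ne_zero, not_false_eq_true, zero_pow, add_zero] at hlim
  refine hlim.congr fun n => ?_
  rw [norm_add_sq_real]
  ring

theorem tendsto_one_div_mul_inner_zero {ι : Type*} {l : Filter ι} {a e : ι → H} {r : ι → ℝ}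
    {R ρ : ℝ} (ha : ∀ n, ‖a n‖ ≤ R) (he : Tendsto (fun n => ‖e n‖) l (𝓝 0)) (hρ : 0 < ρ)
    (hr : ∀ᶠ n in l, ρ ≤ r n) : Tendsto (fun n => 1 / r n * ⟪a n, e n⟫) l (𝓝 0) := by
  simp_rw [← real_inner_smul_right]
  refine tendsto_inner_zero_of_norm_le ha (squeeze_zero' (Eventually.of_forall fun n =>
    norm_nonneg _) (hr.mono fun n hn => ?_) (by simpa using he.div_const ρ))
  rw [norm_smul, Real.norm_eq_abs, abs_of_pos (one_div_pos.2 (hρ.trans_le hn)),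
    one_div_mul_eq_div]
  exact div_le_div_of_nonneg_left (norm_nonneg _) hρ hn

namespace WeakTendsto

variable {ι : Type*} {l : Filter ι} {x u : ι → H} {v : H}

theorem of_tendsto_norm_sub (hx : WeakTendsto x l v)
    (hux : Tendsto (fun n => ‖u n - x n‖) l (𝓝 0)) : WeakTendsto u l v := fun w => by
  have hsmall := tendsto_inner_zero_of_norm_le (fun _ => le_rfl) hux (a := fun _ => w)
  simpa [inner_sub_right, real_inner_comm w] using (hx w).add hsmall

theorem tendsto_inner {y : ι → H} {y₀ : H} {R : ℝ} (hx : WeakTendsto x l v) (hxR : ∀ n, ‖x n‖ ≤ R)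
    (hy : Tendsto y l (𝓝 y₀)) : Tendsto (fun n => ⟪x n, y n⟫) l (𝓝 ⟪v, y₀⟫) := by
  have hsmall := tendsto_inner_zero_of_norm_le hxR (tendsto_iff_norm_sub_tendsto_zero.1 hy)
  simpa [inner_sub_right] using (hx y₀).add hsmall

end WeakTendsto

theorem exists_nearest_mem [CompleteSpace H] {C : Set H} (hne : C.Nonempty) (hcl : IsClosed C)
    (hco : Convex ℝ C) (z : H) : ∃ p ∈ C, ∀ w ∈ C, ‖z - p‖ ≤ ‖z - w‖ := by
  obtain ⟨p, hp, hmin⟩ := exists_norm_eq_iInf_of_complete_convex hne hcl.isComplete hco z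
  refine ⟨p, hp, fun w hw => hmin ▸ ?_⟩
  exact ciInf_le ⟨0, Set.forall_mem_range.2 fun _ => norm_nonneg _⟩ (⟨w, hw⟩ : C)

theorem inner_sub_nearest_nonpos {C : Set H} (hco : Convex ℝ C) {z p : H} (hp : p ∈ C)
    (hmin : ∀ w ∈ C, ‖z - p‖ ≤ ‖z - w‖) {w : H} (hw : w ∈ C) : ⟪z - p, w - p⟫ ≤ 0 := by
  have : Nonempty C := ⟨⟨p, hp⟩⟩
  refine (norm_eq_iInf_iff_real_inner_le_zero hco hp).1 (le_antisymm ?_ ?_) w hw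
  · exact le_ciInf fun w => hmin w w.2
  · exact ciInf_le ⟨0, Set.forall_mem_range.2 fun _ => norm_nonneg _⟩ (⟨p, hp⟩ : C)

theorem WeakTendsto.mem_of_isClosed_of_convex [CompleteSpace H] {ι : Type*} {l : Filter ι}
    [l.NeBot] {x : ι → H} {v : H} {C : Set H} (hcl : IsClosed C) (hco : Convex ℝ C)
    (hxC : ∀ᶠ n in l, x n ∈ C) (hx : WeakTendsto x l v) : v ∈ C := by
  obtain ⟨n, hn⟩ := hxC.exists
  obtain ⟨p, hp, hmin⟩ := exists_nearest_mem ⟨x n, hn⟩ hcl hco v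
  have hlim : Tendsto (fun n => ⟪x n - p, v - p⟫) l (𝓝 ⟪v - p, v - p⟫) := by
    simpa only [← inner_sub_left] using (hx (v - p)).sub_const ⟪p, v - p⟫
  have hle : ⟪v - p, v - p⟫ ≤ 0 := le_of_tendsto hlim <| hxC.mono fun n hn => by
    rw [real_inner_comm]
    exact inner_sub_nearest_nonpos hco hp hmin hn
  rwa [sub_eq_zero.1 (real_inner_self_nonpos.1 hle)]

theorem exists_weakTendsto_of_norm_le [CompleteSpace H] {ι : Type*} {x : ι → H} {R : ℝ}
    (hxR : ∀ n, ‖x n‖ ≤ R) (U : Ultrafilter ι) : ∃ v, WeakTendsto x U v := by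
  have hlim (w : H) : ∃ c, |c| ≤ R * ‖w‖ ∧ Tendsto (fun n => ⟪x n, w⟫) U (𝓝 c) := by
    have hbound : ↑(U.map fun n => ⟪x n, w⟫) ≤ 𝓟 (Set.Icc (-(R * ‖w‖)) (R * ‖w‖)) :=
      le_principal_iff.2 <| mem_map.2 <| Eventually.of_forall fun n => abs_le.1 <|
        (abs_real_inner_le_norm _ _).trans (mul_le_mul_of_nonneg_right (hxR n) (norm_nonneg _))
    obtain ⟨c, hc, hcU⟩ := isCompact_Icc.ultrafilter_le_nhds _ hbound
    exact ⟨c, abs_le.2 hc, hcU⟩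
  choose c hcR hc using hlim
  let φ : H →ₗ[ℝ] ℝ :=
    { toFun := c
      map_add' := fun w₁ w₂ => tendsto_nhds_unique (hc (w₁ + w₂))
        (by simpa only [inner_add_right] using (hc w₁).add (hc w₂))
      map_smul' := fun t w => tendsto_nhds_unique (hc (t • w))
        (by simpa only [real_inner_smul_right, smul_eq_mul, RingHom.id_apply] using
          (hc w).const_mul t) }
  refine ⟨(InnerProductSpace.toDual ℝ H).symm (φ.mkContinuous R hcR), fun w => ?_⟩
  rw [InnerProductSpace.toDual_symm_apply]
  exact hc w

end Hilbert

section FixedPoints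

variable {H : Type*} [NormedAddCommGroup H] {S : H → H}

def IsQuasiNonexpansive (S : H → H) : Prop :=
  ∀ q, IsFixedPt S q → ∀ z, ‖S z - q‖ ≤ ‖z - q‖

def IsGeneralizedHybrid (α β : ℝ) (S : H → H) : Prop :=
  ∀ x y, α * ‖S x - S y‖ ^ 2 + (1 - α) * ‖x - S y‖ ^ 2 ≤
    β * ‖S x - y‖ ^ 2 + (1 - β) * ‖x - y‖ ^ 2

namespace IsQuasiNonexpansive

theorem isClosed_fixedPoints (hS : IsQuasiNonexpansive S) : IsClosed (fixedPoints S) := by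
  refine isSeqClosed_iff_isClosed.1 fun z z₀ hz hlim => ?_
  have hdist := tendsto_iff_norm_sub_tendsto_zero.1 hlim
  have hlim' : Tendsto z atTop (𝓝 (S z₀)) := tendsto_iff_norm_sub_tendsto_zero.2 <|
    squeeze_zero (fun _ => norm_nonneg _) (fun n => by
      rw [norm_sub_rev, norm_sub_rev (z n)]; exact hS _ (hz n) z₀) hdist
  exact tendsto_nhds_unique hlim' hlim

theorem convex_fixedPoints [InnerProductSpace ℝ H] (hS : IsQuasiNonexpansive S) :
    Convex ℝ (fixedPoints S) := by
  intro z₁ hz₁ z₂ hz₂ s t hs ht hst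
  obtain rfl : s = 1 - t := by linarith
  set m := (1 - t) • z₁ + t • z₂
  have hm₁ : ‖z₁ - S m‖ ≤ ‖z₁ - m‖ := by
    rw [norm_sub_rev, norm_sub_rev z₁]; exact hS z₁ hz₁ m
  have hm₂ : ‖z₂ - S m‖ ≤ ‖z₂ - m‖ := by
    rw [norm_sub_rev, norm_sub_rev z₂]; exact hS z₂ hz₂ m
  -- at `y = m` the identity reads `0 = …`, which bounds the same identity at `y = S m`
  have hSm := norm_convexComb_sub_sq z₁ z₂ (S m) t
  have hm := norm_convexComb_sub_sq z₁ z₂ m t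
  rw [sub_self, norm_zero] at hm
  have hle : ‖m - S m‖ ^ 2 ≤ 0 := by
    nlinarith [mul_le_mul_of_nonneg_left (pow_le_pow_left₀ (norm_nonneg _) hm₁ 2) hs,
      mul_le_mul_of_nonneg_left (pow_le_pow_left₀ (norm_nonneg _) hm₂ 2) ht]
  have : m - S m = 0 := by simpa using hle
  exact (sub_eq_zero.1 this).symm

end IsQuasiNonexpansive

namespace IsGeneralizedHybrid

variable {α β : ℝ}

theorem isQuasiNonexpansive (hS : IsGeneralizedHybrid α β S) : IsQuasiNonexpansive S := by
  intro q hq z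
  have h := hS q z
  rw [hq, norm_sub_rev q (S z), norm_sub_rev q z] at h
  exact (sq_le_sq₀ (norm_nonneg _) (norm_nonneg _)).1 (by linarith)

/-- Demiclosedness of `I - S` at `0`. -/
theorem isFixedPt_of_weakTendsto [InnerProductSpace ℝ H] (hS : IsGeneralizedHybrid α β S)
    {ι : Type*} {l : Filter ι} [l.NeBot] {u : ι → H} {v : H} {R : ℝ} (huR : ∀ n, ‖u n‖ ≤ R)
    (hSu : Tendsto (fun n => ‖S (u n) - u n‖) l (𝓝 0)) (hu : WeakTendsto u l v) :
    IsFixedPt S v := by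
  have hbound (y : H) (n : ι) : ‖u n - y‖ ≤ R + ‖y‖ :=
    (norm_sub_le _ _).trans (by linarith [huR n])
  have hgap (y : H) := tendsto_norm_add_sq_sub_norm_sq (hbound y) hSu
  have hupper := ((hgap v).const_mul β).sub ((hgap (S v)).const_mul α)
  rw [mul_zero, mul_zero, sub_zero] at hupper
  have hlower : Tendsto (fun n => ‖u n - S v‖ ^ 2 - ‖u n - v‖ ^ 2) l (𝓝 (‖v - S v‖ ^ 2)) := by
    have hweak := ((hu (v - S v)).sub_const ⟪v, v - S v⟫).const_mul 2
    rw [sub_self, mul_zero] at hweak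
    have hshift := hweak.add_const (‖v - S v‖ ^ 2)
    rw [zero_add] at hshift
    refine hshift.congr fun n => ?_
    rw [← inner_sub_left,
      show u n - S v = (u n - v) + (v - S v) by abel, norm_add_sq_real]
    ring
  have hle : ‖v - S v‖ ^ 2 ≤ 0 := le_of_tendsto_of_tendsto' hlower hupper fun n => by
    have h := hS (u n) v
    rw [show S (u n) - S v = (u n - S v) + (S (u n) - u n) by abel,
      show S (u n) - v = (u n - v) + (S (u n) - u n) by abel] at h
    linarith
  have : v - S v = 0 := by simpa using hle
  exact (sub_eq_zero.1 this).symm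

end IsGeneralizedHybrid

end FixedPoints

section Equilibrium

variable {H : Type*} {E : Set H} {f : H → H → ℝ}

def equilibriumSet (E : Set H) (f : H → H → ℝ) : Set H :=
  {z ∈ E | ∀ w ∈ E, 0 ≤ f z w}

def IsMonotoneBifunction (E : Set H) (f : H → H → ℝ) : Prop :=
  ∀ x ∈ E, ∀ y ∈ E, f x y + f y x ≤ 0

def IsUpperHemicontinuousBifunction [AddCommGroup H] [Module ℝ H] (E : Set H)
    (f : H → H → ℝ) : Prop :=
  ∀ x ∈ E, ∀ y ∈ E, ∀ z ∈ E, limsup (fun t : ℝ => f (t • z + (1 - t) • x) y) (𝓝[>] 0) ≤ f x y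

variable [AddCommGroup H] [Module ℝ H]

/-- Minty's lemma. -/
theorem mem_equilibriumSet_of_forall_le_zero (hEco : Convex ℝ E) (hA1 : ∀ x ∈ E, f x x = 0)
    (hA3 : IsUpperHemicontinuousBifunction E f) (hA4c : ∀ x ∈ E, ConvexOn ℝ E (f x)) {v : H}
    (hv : v ∈ E) (hvf : ∀ w ∈ E, f w v ≤ 0) :
    v ∈ equilibriumSet E f := by
  refine ⟨hv, fun w hw => ?_⟩
  have hsegment : ∀ t ∈ Set.Ioo (0 : ℝ) 1, 0 ≤ f (t • w + (1 - t) • v) w := by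
    rintro t ⟨ht₀, ht₁⟩
    set z := t • w + (1 - t) • v
    have hz : z ∈ E := hEco hw hv ht₀.le (sub_nonneg.2 ht₁.le) (add_sub_cancel t 1)
    have hconv := (hA4c z hz).2 hw hv ht₀.le (sub_nonneg.2 ht₁.le) (add_sub_cancel t 1)
    rw [hA1 z hz, smul_eq_mul, smul_eq_mul] at hconv
    nlinarith [hvf z hz]
  have hlimsup := hA3 v hv w hw w hw
  by_cases hbdd : IsBoundedUnder (· ≤ ·) (𝓝[>] 0) fun t : ℝ => f (t • w + (1 - t) • v) w
  · have hev : ∀ᶠ t in 𝓝[>] (0 : ℝ), 0 ≤ f (t • w + (1 - t) • v) w :=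
      Filter.mem_of_superset (Ioo_mem_nhdsGT one_pos) hsegment
    exact (le_limsup_of_frequently_le hev.frequently hbdd).trans hlimsup
  · -- an unbounded `limsup` in `ℝ` is the junk value `0`
    rwa [Real.limsup_of_not_isBoundedUnder hbdd] at hlimsup

theorem equilibriumSet_eq_inter_biInter (hEco : Convex ℝ E) (hA1 : ∀ x ∈ E, f x x = 0)
    (hA2 : IsMonotoneBifunction E f) (hA3 : IsUpperHemicontinuousBifunction E f)
    (hA4c : ∀ x ∈ E, ConvexOn ℝ E (f x)) :
    equilibriumSet E f = E ∩ ⋂ w ∈ E, {z ∈ E | f w z ≤ 0} := by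
  ext z
  constructor
  · rintro ⟨hz, hzf⟩
    exact ⟨hz, Set.mem_iInter₂.2 fun w hw => ⟨hz, by linarith [hA2 w hw z hz, hzf w hw]⟩⟩
  · rintro ⟨hz, hzf⟩
    exact mem_equilibriumSet_of_forall_le_zero hEco hA1 hA3 hA4c hz fun w hw =>
      (Set.mem_iInter₂.1 hzf w hw).2

theorem convex_equilibriumSet (hEco : Convex ℝ E) (hA1 : ∀ x ∈ E, f x x = 0)
    (hA2 : IsMonotoneBifunction E f) (hA3 : IsUpperHemicontinuousBifunction E f)
    (hA4c : ∀ x ∈ E, ConvexOn ℝ E (f x)) : Convex ℝ (equilibriumSet E f) := by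
  rw [equilibriumSet_eq_inter_biInter hEco hA1 hA2 hA3 hA4c]
  exact hEco.inter (convex_iInter₂ fun w hw => (hA4c w hw).convex_le 0)

theorem isClosed_equilibriumSet [TopologicalSpace H] (hEcl : IsClosed E) (hEco : Convex ℝ E)
    (hA1 : ∀ x ∈ E, f x x = 0) (hA2 : IsMonotoneBifunction E f)
    (hA3 : IsUpperHemicontinuousBifunction E f) (hA4c : ∀ x ∈ E, ConvexOn ℝ E (f x))
    (hA4l : ∀ x ∈ E, LowerSemicontinuousOn (f x) E) : IsClosed (equilibriumSet E f) := by
  rw [equilibriumSet_eq_inter_biInter hEco hA1 hA2 hA3 hA4c]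
  exact hEcl.inter (isClosed_biInter fun w hw => (hA4l w hw).isClosed_inter_preimage_Iic hEcl 0)

end Equilibrium

section Resolvent

variable {H : Type*} [NormedAddCommGroup H] [InnerProductSpace ℝ H] {E : Set H} {f : H → H → ℝ}

theorem sq_norm_sub_add_sq_norm_sub_le_of_resolvent (hA2 : IsMonotoneBifunction E f)
    {x u q : H} {r : ℝ} (hr : 0 < r) (hu : u ∈ E)
    (hres : ∀ w ∈ E, 0 ≤ f u w + 1 / r * ⟪w - u, u - x⟫) (hq : q ∈ equilibriumSet E f) :
    ‖u - q‖ ^ 2 + ‖u - x‖ ^ 2 ≤ ‖x - q‖ ^ 2 := by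
  have hinner : 0 ≤ ⟪q - u, u - x⟫ := by
    have h := hres q hq.1
    have hfq := hq.2 u hu
    have hmono := hA2 u hu q hq.1
    have : 0 ≤ 1 / r * ⟪q - u, u - x⟫ := by linarith
    exact nonneg_of_mul_nonneg_right (by linarith) (one_div_pos.2 hr)
  have hsplit : x - q = -(u - x) - (q - u) := by abel
  rw [hsplit, norm_sub_sq_real (-(u - x)), norm_neg, inner_neg_left, norm_sub_rev q u,
    real_inner_comm]
  linarith

theorem WeakTendsto.mem_equilibriumSet [CompleteSpace H] (hEcl : IsClosed E) (hEco : Convex ℝ E)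
    (hA1 : ∀ x ∈ E, f x x = 0) (hA3 : IsUpperHemicontinuousBifunction E f)
    (hA4c : ∀ x ∈ E, ConvexOn ℝ E (f x)) (hA4l : ∀ x ∈ E, LowerSemicontinuousOn (f x) E)
    {ι : Type*} {l : Filter ι} [l.NeBot] {u : ι → H} {v : H} (hu : ∀ n, u n ∈ E)
    (hfu : ∀ w ∈ E, ∃ g : ι → ℝ, Tendsto g l (𝓝 0) ∧ ∀ n, f w (u n) ≤ g n)
    (huv : WeakTendsto u l v) : v ∈ equilibriumSet E f := by
  have hv : v ∈ E := huv.mem_of_isClosed_of_convex hEcl hEco (Eventually.of_forall hu)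
  refine mem_equilibriumSet_of_forall_le_zero hEco hA1 hA3 hA4c hv fun w hw => ?_
  obtain ⟨g, hg, hfg⟩ := hfu w hw
  refine le_of_forall_pos_le_add fun ε hε => ?_
  have hsub : ∀ᶠ n in l, u n ∈ {z ∈ E | f w z ≤ 0 + ε} :=
    (hg.eventually (gt_mem_nhds hε)).mono fun n hn => ⟨hu n, by linarith [hfg n]⟩
  exact (huv.mem_of_isClosed_of_convex ((hA4l w hw).isClosed_inter_preimage_Iic hEcl _)
    ((hA4c w hw).convex_le _) hsub).2

theorem WeakTendsto.mem_equilibriumSet_of_resolvent [CompleteSpace H] (hEcl : IsClosed E)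
    (hEco : Convex ℝ E) (hA1 : ∀ x ∈ E, f x x = 0) (hA2 : IsMonotoneBifunction E f)
    (hA3 : IsUpperHemicontinuousBifunction E f) (hA4c : ∀ x ∈ E, ConvexOn ℝ E (f x))
    (hA4l : ∀ x ∈ E, LowerSemicontinuousOn (f x) E) {l : Filter ℕ} [l.NeBot] (hl : l ≤ atTop)
    {x u : ℕ → H} {r : ℕ → ℝ} {R : ℝ} {v : H}
    (hr : ∀ n, 0 < r n) (hrinf : 0 < liminf r atTop) (hu : ∀ n, u n ∈ E)
    (hueq : ∀ n, ∀ w ∈ E, 0 ≤ f (u n) w + 1 / r n * ⟪w - u n, u n - x n⟫)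
    (huR : ∀ n, ‖u n‖ ≤ R) (hux : Tendsto (fun n => ‖u n - x n‖) atTop (𝓝 0))
    (huv : WeakTendsto u l v) : v ∈ equilibriumSet E f := by
  have hrρ : ∀ᶠ n in atTop, liminf r atTop / 2 ≤ r n :=
    (eventually_lt_of_lt_liminf (half_lt_self hrinf)
      (isBoundedUnder_of ⟨0, fun n => (hr n).le⟩)).mono fun _ => le_of_lt
  refine huv.mem_equilibriumSet hEcl hEco hA1 hA3 hA4c hA4l hu fun w hw =>
    ⟨fun n => 1 / r n * ⟪w - u n, u n - x n⟫, ?_, fun n => ?_⟩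
  · exact (tendsto_one_div_mul_inner_zero (fun n => (norm_sub_le w (u n)).trans
      (add_le_add_right (huR n) _)) hux (half_pos hrinf) hrρ).mono_left hl
  · linarith [hueq n w hw, hA2 (u n) (hu n) w hw]

end Resolvent

section Fejer

variable {H : Type*} [NormedAddCommGroup H] {K : Set H} {x : ℕ → H}

def FejerMonotone (x : ℕ → H) (K : Set H) : Prop :=
  ∀ q ∈ K, Antitone fun n => ‖x n - q‖

namespace FejerMonotone

theorem tendsto_norm_sub (hx : FejerMonotone x K) {q : H} (hq : q ∈ K) :
    Tendsto (fun n => ‖x n - q‖) atTop (𝓝 (⨅ n, ‖x n - q‖)) :=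
  tendsto_atTop_ciInf (hx q hq) ⟨0, Set.forall_mem_range.2 fun _ => norm_nonneg _⟩

theorem norm_le (hx : FejerMonotone x K) {q : H} (hq : q ∈ K) (n : ℕ) :
    ‖x n‖ ≤ ‖x 0 - q‖ + ‖q‖ :=
  (norm_le_norm_add_norm_sub' _ q).trans (by linarith [hx q hq n.zero_le])

theorem exists_tendsto_inner [InnerProductSpace ℝ H] (hx : FejerMonotone x K) {q₁ q₂ : H}
    (hq₁ : q₁ ∈ K) (hq₂ : q₂ ∈ K) :
    ∃ c, Tendsto (fun n => ⟪x n, q₁ - q₂⟫) atTop (𝓝 c) := by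
  have h := ((((hx.tendsto_norm_sub hq₂).pow 2).sub ((hx.tendsto_norm_sub hq₁).pow 2)).add_const
    (‖q₁‖ ^ 2 - ‖q₂‖ ^ 2)).div_const 2
  refine ⟨_, h.congr fun n => ?_⟩
  rw [norm_sub_sq_real, norm_sub_sq_real, inner_sub_right]
  ring

/-- Opial's argument: the weak cluster points are unique because `⟪x n, q₁ - q₂⟫` converges for
all `q₁ q₂ ∈ K`. -/
theorem exists_weakTendsto [InnerProductSpace ℝ H] [CompleteSpace H] (hx : FejerMonotone x K)
    (hne : K.Nonempty)
    (hcl : ∀ U : Ultrafilter ℕ, (U : Filter ℕ) ≤ atTop → ∀ v, WeakTendsto x (U : Filter ℕ) v →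
      v ∈ K) :
    ∃ v ∈ K, WeakTendsto x atTop v := by
  obtain ⟨q, hq⟩ := hne
  have hlim (U : Ultrafilter ℕ) : ∃ v, WeakTendsto x (U : Filter ℕ) v :=
    exists_weakTendsto_of_norm_le (hx.norm_le hq) U
  have huniq (U₁ U₂ : Ultrafilter ℕ) (hU₁ : (U₁ : Filter ℕ) ≤ atTop)
      (hU₂ : (U₂ : Filter ℕ) ≤ atTop) (v₁ v₂ : H)
      (h₁ : WeakTendsto x (U₁ : Filter ℕ) v₁) (h₂ : WeakTendsto x (U₂ : Filter ℕ) v₂) :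
      v₁ = v₂ := by
    obtain ⟨c, hc⟩ := hx.exists_tendsto_inner (hcl U₁ hU₁ v₁ h₁) (hcl U₂ hU₂ v₂ h₂)
    have hc₁ : ⟪v₁, v₁ - v₂⟫ = c := tendsto_nhds_unique (h₁ _) (hc.mono_left hU₁)
    have hc₂ : ⟪v₂, v₁ - v₂⟫ = c := tendsto_nhds_unique (h₂ _) (hc.mono_left hU₂)
    rw [← sub_eq_zero, ← inner_self_eq_zero (𝕜 := ℝ), inner_sub_left, hc₁, hc₂, sub_self]
  obtain ⟨v, hv⟩ := hlim (Ultrafilter.of atTop)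
  refine ⟨v, hcl _ (Ultrafilter.of_le _) v hv, fun w => ?_⟩
  refine (tendsto_iff_ultrafilter _ _ _).2 fun U hU => ?_
  obtain ⟨v', hv'⟩ := hlim U
  rw [huniq _ U (Ultrafilter.of_le _) hU v v' hv hv']
  exact hv' w

theorem cauchySeq_of_nearest [InnerProductSpace ℝ H] (hx : FejerMonotone x K) (hco : Convex ℝ K)
    {p : ℕ → H}
    (hp : ∀ n, p n ∈ K ∧ ∀ w ∈ K, ‖x n - p n‖ ≤ ‖x n - w‖) : CauchySeq p := by
  set d := fun n => ‖x n - p n‖ ^ 2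
  have hgap (n m : ℕ) (hnm : n ≤ m) : ‖p m - p n‖ ^ 2 ≤ d n - d m := by
    have hobtuse : 0 ≤ ⟪x m - p m, p m - p n⟫ := by
      have h := inner_sub_nearest_nonpos hco (hp m).1 (hp m).2 (hp n).1
      rw [← neg_sub (p m) (p n), inner_neg_right] at h
      linarith
    have hfejer : ‖x m - p n‖ ≤ ‖x n - p n‖ := hx (p n) (hp n).1 hnm
    have hsplit : ‖x m - p n‖ ^ 2 = d m + 2 * ⟪x m - p m, p m - p n⟫ + ‖p m - p n‖ ^ 2 := by
      rw [← norm_add_sq_real, sub_add_sub_cancel]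
    nlinarith [pow_le_pow_left₀ (norm_nonneg _) hfejer 2]
  have hd : Antitone d := fun n m hnm => by linarith [hgap n m hnm, sq_nonneg ‖p m - p n‖]
  have hL := tendsto_atTop_ciInf hd ⟨0, Set.forall_mem_range.2 fun _ => sq_nonneg _⟩
  refine Metric.cauchySeq_iff'.2 fun ε hε => ?_
  obtain ⟨N, hN⟩ := eventually_atTop.1 (hL.eventually (gt_mem_nhds (lt_add_of_pos_right _
    (pow_pos hε 2))))
  refine ⟨N, fun n hn => ?_⟩
  rw [dist_eq_norm]
  refine lt_of_pow_lt_pow_left₀ 2 hε.le ?_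
  linarith [hgap N n hn, hd.le_of_tendsto hL n, hN N le_rfl]

theorem tendsto_nearest [InnerProductSpace ℝ H] [CompleteSpace H] (hx : FejerMonotone x K)
    (hco : Convex ℝ K)
    {p : ℕ → H} (hp : ∀ n, p n ∈ K ∧ ∀ w ∈ K, ‖x n - p n‖ ≤ ‖x n - w‖) {v : H} (hv : v ∈ K)
    (hxv : WeakTendsto x atTop v) : Tendsto p atTop (𝓝 v) := by
  obtain ⟨p₀, hp₀⟩ := cauchySeq_tendsto_of_complete (hx.cauchySeq_of_nearest hco hp)
  have hdir : Tendsto (fun n => v - p n) atTop (𝓝 (v - p₀)) := tendsto_const_nhds.sub hp₀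
  have hlim : Tendsto (fun n => ⟪x n - p n, v - p n⟫) atTop (𝓝 ⟪v - p₀, v - p₀⟫) := by
    simpa only [inner_sub_left] using
      (hxv.tendsto_inner (hx.norm_le hv) hdir).sub (hp₀.inner hdir)
  have hle := le_of_tendsto' hlim fun n => inner_sub_nearest_nonpos hco (hp n).1 (hp n).2 hv
  rwa [sub_eq_zero.1 (real_inner_self_nonpos.1 hle)]

end FejerMonotone

end Fejer

section Ishikawa

variable {H : Type*} [NormedAddCommGroup H] [InnerProductSpace ℝ H]

theorem sq_norm_ishikawa_sub_add_le {S : H → H} {q x u : H} {s t : ℝ}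
    (hq : ∀ z, ‖S z - q‖ ≤ ‖z - q‖) (hu : ‖u - q‖ ^ 2 + ‖u - x‖ ^ 2 ≤ ‖x - q‖ ^ 2)
    (hs₀ : 0 ≤ s) (hs₁ : s ≤ 1) (ht₀ : 0 ≤ t) :
    ‖(1 - s) • x + s • S ((1 - t) • x + t • S u) - q‖ ^ 2 + s * t * ‖u - x‖ ^ 2
      + s * (t * (1 - t)) * ‖x - S u‖ ^ 2 ≤ ‖x - q‖ ^ 2 := by
  set y := (1 - t) • x + t • S u
  have hSq (z : H) : ‖S z - q‖ ^ 2 ≤ ‖z - q‖ ^ 2 := pow_le_pow_left₀ (norm_nonneg _) (hq z) 2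
  have hy : ‖y - q‖ ^ 2 + t * ‖u - x‖ ^ 2 + t * (1 - t) * ‖x - S u‖ ^ 2 ≤ ‖x - q‖ ^ 2 := by
    rw [norm_convexComb_sub_sq]
    nlinarith [mul_le_mul_of_nonneg_left (hSq u) ht₀]
  rw [norm_convexComb_sub_sq]
  nlinarith [mul_le_mul_of_nonneg_left (hSq y) hs₀, mul_le_mul_of_nonneg_left hy hs₀,
    mul_nonneg (mul_nonneg hs₀ (sub_nonneg.2 hs₁)) (sq_nonneg ‖x - S y‖)]

theorem ishikawa_fejerMonotone_and_tendsto {S : H → H} {K : Set H} {x u y : ℕ → H}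
    {αs βs : ℕ → ℝ} {a b : ℝ} (hS : ∀ q ∈ K, ∀ z, ‖S z - q‖ ≤ ‖z - q‖)
    (hres : ∀ q ∈ K, ∀ n, ‖u n - q‖ ^ 2 + ‖u n - x n‖ ^ 2 ≤ ‖x n - q‖ ^ 2) (hne : K.Nonempty)
    (ha : 0 < a) (hαs : ∀ n, a ≤ αs n ∧ αs n ≤ 1) (hb : 0 < b) (hβs : ∀ n, b ≤ βs n ∧ βs n ≤ 1)
    (hβinf : 0 < liminf (fun n => βs n * (1 - βs n)) atTop)
    (hy : ∀ n, y n = (1 - βs n) • x n + βs n • S (u n))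
    (hx : ∀ n, x (n + 1) = (1 - αs n) • x n + αs n • S (y n)) :
    FejerMonotone x K ∧ Tendsto (fun n => ‖u n - x n‖) atTop (𝓝 0) ∧
      Tendsto (fun n => ‖S (u n) - u n‖) atTop (𝓝 0) := by
  have hα₀ (n : ℕ) : 0 ≤ αs n := ha.le.trans (hαs n).1
  have hβ₀ (n : ℕ) : 0 ≤ βs n := hb.le.trans (hβs n).1
  have hββ (n : ℕ) : 0 ≤ βs n * (1 - βs n) := mul_nonneg (hβ₀ n) (sub_nonneg.2 (hβs n).2)
  have hdrop (q : H) (hq : q ∈ K) (n : ℕ) :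
      αs n * βs n * ‖u n - x n‖ ^ 2 ≤ ‖x n - q‖ ^ 2 - ‖x (n + 1) - q‖ ^ 2 ∧
      αs n * (βs n * (1 - βs n)) * ‖x n - S (u n)‖ ^ 2 ≤
        ‖x n - q‖ ^ 2 - ‖x (n + 1) - q‖ ^ 2 := by
    have hstep := sq_norm_ishikawa_sub_add_le (hS q hq) (hres q hq n) (hα₀ n) (hαs n).2 (hβ₀ n)
    rw [← hy, ← hx] at hstep
    have h₁ := mul_nonneg (mul_nonneg (hα₀ n) (hβ₀ n)) (sq_nonneg ‖u n - x n‖)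
    have h₂ := mul_nonneg (mul_nonneg (hα₀ n) (hββ n)) (sq_nonneg ‖x n - S (u n)‖)
    constructor <;> linarith
  have hfejer : FejerMonotone x K := fun q hq => antitone_nat_of_succ_le fun n =>
    (sq_le_sq₀ (norm_nonneg _) (norm_nonneg _)).1 <| sub_nonneg.1 <|
      (mul_nonneg (mul_nonneg (hα₀ n) (hβ₀ n)) (sq_nonneg _)).trans (hdrop q hq n).1
  obtain ⟨q, hq⟩ := hne
  have hd := (hfejer.tendsto_norm_sub hq).pow 2
  have hux := tendsto_zero_of_mul_sq_le_sub_succ hd (mul_pos ha hb)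
    (Eventually.of_forall fun n => mul_le_mul (hαs n).1 (hβs n).1 hb.le (hα₀ n))
    (fun _ => norm_nonneg _) fun n => (hdrop q hq n).1
  have hββ_lower : ∀ᶠ n in atTop, liminf (fun n => βs n * (1 - βs n)) atTop / 2 ≤
      βs n * (1 - βs n) :=
    (eventually_lt_of_lt_liminf (half_lt_self hβinf) (isBoundedUnder_of ⟨0, hββ⟩)).mono
      fun _ => le_of_lt
  have hxSu := tendsto_zero_of_mul_sq_le_sub_succ hd (mul_pos ha (half_pos hβinf))
    (hββ_lower.mono fun n hn => mul_le_mul (hαs n).1 hn (half_pos hβinf).le (hα₀ n))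
    (fun _ => norm_nonneg _) fun n => (hdrop q hq n).2
  refine ⟨hfejer, hux, squeeze_zero (fun _ => norm_nonneg _)
    (fun n => norm_sub_le_norm_sub_add_norm_sub _ (x n) _) ?_⟩
  simpa [norm_sub_rev] using hxSu.add hux

end Ishikawa

theorem stmt_0_general
    {H : Type*} [NormedAddCommGroup H] [InnerProductSpace ℝ H] [CompleteSpace H]
    (E : Set H) (hEcl : IsClosed E) (hEco : Convex ℝ E)
    (f : H → H → ℝ)
    (hA1 : ∀ x ∈ E, f x x = 0)
    (hA2 : ∀ x ∈ E, ∀ y ∈ E, f x y + f y x ≤ 0)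
    (hA3 : ∀ x ∈ E, ∀ y ∈ E, ∀ z ∈ E,
      Filter.limsup (fun t : ℝ => f (t • z + (1 - t) • x) y) (nhdsWithin 0 (Set.Ioi 0)) ≤ f x y)
    (hA4c : ∀ x ∈ E, ConvexOn ℝ E (f x))
    (hA4l : ∀ x ∈ E, LowerSemicontinuousOn (f x) E)
    (S : H → H) (α β : ℝ)
    (hS : ∀ x y : H,
      α * ‖S x - S y‖ ^ 2 + (1 - α) * ‖x - S y‖ ^ 2 ≤
        β * ‖S x - y‖ ^ 2 + (1 - β) * ‖x - y‖ ^ 2)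
    (K : Set H)
    (hK : K = {z : H | S z = z} ∩ {z ∈ E | ∀ w ∈ E, 0 ≤ f z w})
    (hKne : K.Nonempty)
    (a : ℝ) (ha : 0 < a)
    (αs : ℕ → ℝ) (hαs : ∀ n, a ≤ αs n ∧ αs n ≤ 1)
    (r : ℕ → ℝ) (hr : ∀ n, 0 < r n) (hrinf : 0 < Filter.liminf r Filter.atTop)
    (b : ℝ) (hb : 0 < b)
    (βs : ℕ → ℝ) (hβs : ∀ n, b ≤ βs n ∧ βs n ≤ 1)
    (hβinf : 0 < Filter.liminf (fun n => βs n * (1 - βs n)) Filter.atTop)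
    (x u y : ℕ → H)
    (hu : ∀ n, u n ∈ E)
    (hueq : ∀ n, ∀ w ∈ E, 0 ≤ f (u n) w + (1 / r n) * ⟪w - u n, u n - x n⟫)
    (hy : ∀ n, y n = (1 - βs n) • x n + βs n • S (u n))
    (hx : ∀ n, x (n + 1) = (1 - αs n) • x n + αs n • S (y n)) :
    ∃ v ∈ K,
      (∀ w : H, Filter.Tendsto (fun n => ⟪x n, w⟫) Filter.atTop (𝓝 ⟪v, w⟫)) ∧
      ∃ p : ℕ → H,
        (∀ n, p n ∈ K ∧ ∀ w ∈ K, ‖x n - p n‖ ≤ ‖x n - w‖) ∧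
        Filter.Tendsto p Filter.atTop (𝓝 v) := by
  have hSgh : IsGeneralizedHybrid α β S := hS
  have hK' : K = fixedPoints S ∩ equilibriumSet E f := hK
  have hKcl : IsClosed K := hK' ▸ hSgh.isQuasiNonexpansive.isClosed_fixedPoints.inter
    (isClosed_equilibriumSet hEcl hEco hA1 hA2 hA3 hA4c hA4l)
  have hKco : Convex ℝ K := hK' ▸ hSgh.isQuasiNonexpansive.convex_fixedPoints.inter
    (convex_equilibriumSet hEco hA1 hA2 hA3 hA4c)
  have hres (q : H) (hq : q ∈ K) (n : ℕ) : ‖u n - q‖ ^ 2 + ‖u n - x n‖ ^ 2 ≤ ‖x n - q‖ ^ 2 :=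
    sq_norm_sub_add_sq_norm_sub_le_of_resolvent hA2 (hr n) (hu n) (hueq n) (hK' ▸ hq).2
  obtain ⟨hfejer, hux, hSu⟩ := ishikawa_fejerMonotone_and_tendsto
    (fun q hq => hSgh.isQuasiNonexpansive q (hK' ▸ hq).1) hres hKne ha hαs hb hβs hβinf hy hx
  obtain ⟨q, hq⟩ := hKne
  have huR (n : ℕ) : ‖u n‖ ≤ ‖x 0 - q‖ + ‖q‖ := by
    have hun : ‖u n - q‖ ≤ ‖x n - q‖ :=
      (sq_le_sq₀ (norm_nonneg _) (norm_nonneg _)).1 (by nlinarith [hres q hq n])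
    linarith [norm_le_norm_add_norm_sub' (u n) q, hfejer q hq n.zero_le]
  have hcluster (U : Ultrafilter ℕ) (hU : (U : Filter ℕ) ≤ atTop) (v : H)
      (hxv : WeakTendsto x (U : Filter ℕ) v) : v ∈ K := by
    have huv := hxv.of_tendsto_norm_sub (hux.mono_left hU)
    exact hK' ▸ ⟨hSgh.isFixedPt_of_weakTendsto huR (hSu.mono_left hU) huv,
      huv.mem_equilibriumSet_of_resolvent hEcl hEco hA1 hA2 hA3 hA4c hA4l hU hr hrinf hu hueq huR
        hux⟩
  obtain ⟨v, hvK, hxv⟩ := hfejer.exists_weakTendsto ⟨q, hq⟩ hcluster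
  choose p hpK hpmin using exists_nearest_mem ⟨q, hq⟩ hKcl hKco
  have hp (n : ℕ) : p (x n) ∈ K ∧ ∀ w ∈ K, ‖x n - p (x n)‖ ≤ ‖x n - w‖ := ⟨hpK _, hpmin _⟩
  exact ⟨v, hvK, hxv, fun n => p (x n), hp, hfejer.tendsto_nearest hKco hp hvK hxv⟩

/-- Theorem 3.1: weak convergence of the modified Ishikawa iteration for an
equilibrium problem and an (α, β)-generalized hybrid mapping. -/
theorem stmt_0
    {H : Type*} [NormedAddCommGroup H] [InnerProductSpace ℝ H] [CompleteSpace H]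
    (E : Set H) (hEne : E.Nonempty) (hEcl : IsClosed E) (hEco : Convex ℝ E)
    (f : H → H → ℝ)
    (hA1 : ∀ x ∈ E, f x x = 0)
    (hA2 : ∀ x ∈ E, ∀ y ∈ E, f x y + f y x ≤ 0)
    (hA3 : ∀ x ∈ E, ∀ y ∈ E, ∀ z ∈ E,
      Filter.limsup (fun t : ℝ => f (t • z + (1 - t) • x) y) (nhdsWithin 0 (Set.Ioi 0)) ≤ f x y)
    (hA4c : ∀ x ∈ E, ConvexOn ℝ E (f x))
    (hA4l : ∀ x ∈ E, LowerSemicontinuousOn (f x) E)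
    (S : H → H) (α β : ℝ)
    (hS : ∀ x y : H,
      α * ‖S x - S y‖ ^ 2 + (1 - α) * ‖x - S y‖ ^ 2 ≤
        β * ‖S x - y‖ ^ 2 + (1 - β) * ‖x - y‖ ^ 2)
    (K : Set H)
    (hK : K = {z : H | S z = z} ∩ {z ∈ E | ∀ w ∈ E, 0 ≤ f z w})
    (hKne : K.Nonempty)
    (a : ℝ) (ha : 0 < a) (ha1 : a ≤ 1)
    (αs : ℕ → ℝ) (hαs : ∀ n, a ≤ αs n ∧ αs n ≤ 1)
    (r : ℕ → ℝ) (hr : ∀ n, 0 < r n) (hrinf : 0 < Filter.liminf r Filter.atTop)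
    (b : ℝ) (hb : 0 < b) (hb1 : b < 1)
    (βs : ℕ → ℝ) (hβs : ∀ n, b ≤ βs n ∧ βs n ≤ 1)
    (hβinf : 0 < Filter.liminf (fun n => βs n * (1 - βs n)) Filter.atTop)
    (x u y : ℕ → H)
    (hu : ∀ n, u n ∈ E)
    (hueq : ∀ n, ∀ w ∈ E, 0 ≤ f (u n) w + (1 / r n) * ⟪w - u n, u n - x n⟫)
    (hy : ∀ n, y n = (1 - βs n) • x n + βs n • S (u n))
    (hx : ∀ n, x (n + 1) = (1 - αs n) • x n + αs n • S (y n)) :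
    ∃ v ∈ K,
      (∀ w : H, Filter.Tendsto (fun n => ⟪x n, w⟫) Filter.atTop (𝓝 ⟪v, w⟫)) ∧
      ∃ p : ℕ → H,
        (∀ n, p n ∈ K ∧ ∀ w ∈ K, ‖x n - p n‖ ≤ ‖x n - w‖) ∧
        Filter.Tendsto p Filter.atTop (𝓝 v) :=
  stmt_0_general E hEcl hEco f hA1 hA2 hA3 hA4c hA4l S α β hS K hK hKne a ha αs hαs r hr hrinf b hb
    βs hβs hβinf x u y hu hueq hy hx
end

section
/- Let H be a real Hilbert space, let E be a nonempty closed convex subset of H, and let {x_n} be a sequence in H such that ‖x_{n+1} − x‖ ≤ ‖x_n − x‖ for all n ∈ ℕ and all x ∈ E. Then the sequence {P_E(x_n)} converges strongly (in norm) to some point z ∈ E, where P_E denotes the metric projection of H onto E. -/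
open Filter RealInnerProductSpace
open scoped Topology

private lemma min_iff_iInf {H : Type*} [NormedAddCommGroup H] [InnerProductSpace ℝ H]
    {E : Set H} (u v : H) (hv : v ∈ E) :
    (‖u - v‖ = ⨅ w : E, ‖u - w‖) ↔ ∀ w ∈ E, ‖u - v‖ ≤ ‖u - w‖ := by
  have hbdd : BddBelow (Set.range fun w : E => ‖u - (w : H)‖) :=
    ⟨0, by rintro r ⟨w, rfl⟩; positivity⟩
  constructor
  · intro h w hw
    rw [h]
    exact ciInf_le hbdd ⟨w, hw⟩
  · intro h
    haveI : Nonempty E := ⟨⟨v, hv⟩⟩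
    exact le_antisymm (le_ciInf fun w => h w w.2) (ciInf_le hbdd ⟨v, hv⟩)

private lemma key_est {H : Type*} [NormedAddCommGroup H] [InnerProductSpace ℝ H]
    (a b c : H) (h : ⟪a - b, c - b⟫ ≤ 0) :
    ‖b - c‖ ^ 2 ≤ ‖a - c‖ ^ 2 - ‖a - b‖ ^ 2 := by
  have e := norm_add_sq_real (a - b) (b - c)
  have h2 : ⟪a - b, b - c⟫ = -⟪a - b, c - b⟫ := by
    rw [← inner_neg_right]; congr 1; abel
  rw [show a - b + (b - c) = a - c by abel] at e
  nlinarith [h, e, h2]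

/-- Lemma 2.2: if ‖x_{n+1} − z‖ ≤ ‖x_n − z‖ for all n and all z ∈ E, then the
sequence of metric projections {P_E(x_n)} converges strongly to some z ∈ E. -/
theorem stmt_5
    {H : Type*} [NormedAddCommGroup H] [InnerProductSpace ℝ H] [CompleteSpace H]
    (E : Set H) (hEne : E.Nonempty) (hEcl : IsClosed E) (hEco : Convex ℝ E)
    (x : ℕ → H)
    (hdec : ∀ n : ℕ, ∀ z ∈ E, ‖x (n + 1) - z‖ ≤ ‖x n - z‖) :
    ∃ z ∈ E, ∀ p : ℕ → H,
      (∀ n, p n ∈ E ∧ ∀ w ∈ E, ‖x n - p n‖ ≤ ‖x n - w‖) →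
      Filter.Tendsto p Filter.atTop (𝓝 z) := by
  have hcomp : IsComplete E := hEcl.isComplete
  -- canonical projection sequence
  have hex : ∀ n : ℕ, ∃ v ∈ E, ∀ w ∈ E, ‖x n - v‖ ≤ ‖x n - w‖ := by
    intro n
    obtain ⟨v, hv, hmin⟩ := exists_norm_eq_iInf_of_complete_convex hEne hcomp hEco (x n)
    exact ⟨v, hv, (min_iff_iInf (x n) v hv).mp hmin⟩
  choose q hqE hqmin using hex
  have hq_inner : ∀ n, ∀ w ∈ E, ⟪x n - q n, w - q n⟫ ≤ 0 := fun n =>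
    (norm_eq_iInf_iff_real_inner_le_zero hEco (hqE n)).mp
      ((min_iff_iInf (x n) (q n) (hqE n)).mpr (hqmin n))
  -- monotonicity in m
  have hmono : ∀ z ∈ E, ∀ n m : ℕ, n ≤ m → ‖x m - z‖ ≤ ‖x n - z‖ := by
    intro z hz n m hnm
    induction m, hnm using Nat.le_induction with
    | base => exact le_refl _
    | succ m hm ih => exact (hdec m z hz).trans ih
  set d : ℕ → ℝ := fun n => ‖x n - q n‖ with hd
  have hanti : Antitone d := antitone_nat_of_succ_le fun n =>
    ((hqmin (n + 1) (q n) (hqE n)).trans (hdec n (q n) (hqE n)))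
  -- key estimate
  have hkey : ∀ n m : ℕ, n ≤ m → ‖q m - q n‖ ^ 2 ≤ d n ^ 2 - d m ^ 2 := by
    intro n m hnm
    have h1 := key_est (x m) (q m) (q n) (hq_inner m (q n) (hqE n))
    have h2 : ‖x m - q n‖ ≤ d n := hmono (q n) (hqE n) n m hnm
    have h3 : (0:ℝ) ≤ ‖x m - q n‖ := norm_nonneg _
    nlinarith
  -- d converges, so d^2 is Cauchy
  have hdco : Tendsto d atTop (𝓝 (⨅ n, d n)) :=
    tendsto_atTop_ciInf hanti ⟨0, by rintro r ⟨n, rfl⟩; positivity⟩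
  have hd2cauchy : CauchySeq fun n => d n ^ 2 := (hdco.pow 2).cauchySeq
  have sq_step : ∀ (m n : ℕ), n ≤ m → ∀ ε : ℝ, 0 < ε →
      |d n ^ 2 - d m ^ 2| < ε ^ 2 → ‖q m - q n‖ < ε := by
    intro m n h ε hε habs
    have h1 := hkey n m h
    have h2 : d n ^ 2 - d m ^ 2 ≤ |d n ^ 2 - d m ^ 2| := le_abs_self _
    have hsq : ‖q m - q n‖ ^ 2 < ε ^ 2 := by nlinarith
    exact lt_of_pow_lt_pow_left₀ 2 (le_of_lt hε) hsq
  have hqcauchy : CauchySeq q := by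
    rw [Metric.cauchySeq_iff]
    intro ε hε
    obtain ⟨N, hN⟩ := Metric.cauchySeq_iff.mp hd2cauchy (ε ^ 2) (by positivity)
    refine ⟨N, fun m hm n hn => ?_⟩
    rw [dist_eq_norm]
    rcases le_total n m with h | h
    · have hd := hN n hn m hm
      rw [Real.dist_eq] at hd
      exact sq_step m n h ε hε hd
    · have hd := hN m hm n hn
      rw [Real.dist_eq] at hd
      rw [← norm_neg, neg_sub]
      exact sq_step n m h ε hε hd
  obtain ⟨z, hz⟩ := cauchySeq_tendsto_of_complete hqcauchy
  have hzE : z ∈ E := hEcl.mem_of_tendsto hz (Filter.Eventually.of_forall hqE)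
  refine ⟨z, hzE, fun p hp => ?_⟩
  -- any valid p equals q
  have hpq : p = q := by
    funext n
    obtain ⟨hpE, hpmin⟩ := hp n
    have hp_inner : ∀ w ∈ E, ⟪x n - p n, w - p n⟫ ≤ 0 :=
      (norm_eq_iInf_iff_real_inner_le_zero hEco hpE).mp
        ((min_iff_iInf (x n) (p n) hpE).mpr hpmin)
    have h1 := hp_inner (q n) (hqE n)
    have h2 := hq_inner n (p n) hpE
    have hle : ⟪q n - p n, q n - p n⟫ ≤ 0 := by
      have e : q n - p n = (x n - p n) - (x n - q n) := by abel
      rw [e, inner_sub_left]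
      have h3 : ⟪x n - q n, q n - p n⟫ = -⟪x n - q n, p n - q n⟫ := by
        rw [← inner_neg_right]; congr 1; abel
      rw [show (x n - p n) - (x n - q n) = q n - p n from by abel]
      linarith [h1, h2, h3]
    have : q n - p n = 0 := real_inner_self_nonpos.mp hle
    have := sub_eq_zero.mp this
    exact this.symm
  rw [hpq]
  exact hz
end

section
/- Let H be a real Hilbert space, E a nonempty closed convex subset of H, and f : E × E → ℝ a bifunction satisfying conditions (A1)–(A4). Then for every r > 0 and every x ∈ H there exists z ∈ E such that f(z, y) + (1/r)⟨y − z, z − x⟩ ≥ 0 for all y ∈ E. -/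
/-!
For `y ∈ E` let `C y = {z ∈ E | r f(y,z) + ⟪z - y, z - x⟫ ≤ 0}` (`mintySet`). These sets are
closed and convex by (A4), and bounded because a convex function that is lower semicontinuous at
a point grows at least linearly. Monotonicity makes them a KKM family: if `z = ∑ λᵢ yᵢ` lay in
no `C yᵢ`, the convex function `y ↦ r f(z,y) + ⟪y - z, z - x⟫` would be negative at every `yᵢ`,
hence at `z`, where it vanishes. KKM for closed convex sets (Berge's intersection theorem, by
induction and Hahn–Banach separation) gives the finite intersection property, and in a Hilbert
space a family of closed convex sets with this property, one of them bounded, has a common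
point: the minimal-norm points of the finite intersections form a Cauchy net. A common point `z`
solves the problem by Minty's argument: test with `t y + (1 - t) z`, use convexity of
`f(t y + (1 - t) z, ·)` and let `t ↓ 0` with (A3).
-/

open Filter Set RealInnerProductSpace
open scoped Topology

theorem ConvexOn.exists_sub_one_sub_mul_norm_le {E : Type*} [NormedAddCommGroup E]
    [NormedSpace ℝ E] {s : Set E} {g : E → ℝ} {z₀ : E} (hg : ConvexOn ℝ s g) (hz₀ : z₀ ∈ s)
    (hlsc : LowerSemicontinuousWithinAt g s z₀) : ∃ a, ∀ z ∈ s, g z₀ - 1 - a * ‖z - z₀‖ ≤ g z := by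
  obtain ⟨δ, hδ, hball⟩ := Metric.mem_nhdsWithin_iff.1 (hlsc (g z₀ - 1) (by linarith))
  refine ⟨2 / δ, fun z hz => ?_⟩
  by_cases hzδ : ‖z - z₀‖ < δ
  · have : g z₀ - 1 < g z := hball ⟨by rwa [Metric.mem_ball, dist_eq_norm], hz⟩
    have : 0 ≤ 2 / δ * ‖z - z₀‖ := by positivity
    linarith
  -- compare with the point at distance `δ / 2` from `z₀` on the segment towards `z`
  rw [not_lt] at hzδ
  have hn : 0 < ‖z - z₀‖ := hδ.trans_le hzδ
  set t := δ / 2 / ‖z - z₀‖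
  have ht0 : 0 < t := by positivity
  have ht1 : t ≤ 1 := by rw [div_le_one hn]; linarith
  have hw : dist ((1 - t) • z₀ + t • z) z₀ < δ := by
    rw [dist_eq_norm, show (1 - t) • z₀ + t • z - z₀ = t • (z - z₀) by module, norm_smul,
      Real.norm_of_nonneg ht0.le, div_mul_cancel₀ _ hn.ne']
    linarith
  have h1 : g z₀ - 1 < g ((1 - t) • z₀ + t • z) :=
    hball ⟨hw, hg.1 hz₀ hz (by linarith : 0 ≤ 1 - t) ht0.le (by ring)⟩
  have h2 : g ((1 - t) • z₀ + t • z) ≤ (1 - t) * g z₀ + t * g z :=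
    hg.2 hz₀ hz (by linarith) ht0.le (by ring)
  have ht : t * (2 / δ * ‖z - z₀‖) = 1 := by simp only [t]; field_simp
  have : t * (g z₀ - 2 / δ * ‖z - z₀‖) < t * g z := by nlinarith
  linarith [lt_of_mul_lt_mul_left this ht0.le]

section Berge

variable {E : Type*} [AddCommGroup E] [Module ℝ E] [TopologicalSpace E]
  [IsTopologicalAddGroup E] [ContinuousSMul ℝ E]

theorem IsClosed.inter_nonempty_of_convex_union {s t : Set E} (hs : IsClosed s) (ht : IsClosed t)
    (hst : Convex ℝ (s ∪ t)) (hs' : s.Nonempty) (ht' : t.Nonempty) : (s ∩ t).Nonempty :=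
  let ⟨a, ha⟩ := hs'
  let ⟨b, hb⟩ := ht'
  (isPreconnected_closed_iff.1 hst.isPreconnected s t hs ht subset_rfl
    ⟨a, mem_union_left t ha, ha⟩ ⟨b, mem_union_right s hb, hb⟩).mono inter_subset_right

theorem exists_mem_segment_eq_of_le_of_le {φ : E → ℝ} (hφ : Continuous φ) {a b : E} {c : ℝ}
    (ha : φ a ≤ c) (hb : c ≤ φ b) : ∃ w ∈ segment ℝ a b, φ w = c :=
  (convex_segment a b).isPreconnected.intermediate_value (left_mem_segment ℝ a b)
    (right_mem_segment ℝ a b) hφ.continuousOn ⟨ha, hb⟩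

theorem nonempty_biInter_erase_inter_setOf_eq {ι : Type*} [DecidableEq ι] {s : Finset ι}
    {C : ι → Set E} (hCv : ∀ i ∈ s, Convex ℝ (C i))
    (h : ∀ i ∈ s, (⋂ j ∈ s.erase i, C j).Nonempty) {k : ι} (hk : k ∈ s) {φ : E → ℝ}
    (hφ : Continuous φ) {u : ℝ} (hA : ∀ a ∈ ⋂ j ∈ s.erase k, C j, φ a ≤ u)
    (hCk : ∀ b ∈ C k, u ≤ φ b) (i : ι) (hi : i ∈ s.erase k) :
    (⋂ j ∈ (s.erase k).erase i, C j ∩ {w | φ w = u}).Nonempty := by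
  obtain ⟨a, ha⟩ := h k hk
  obtain ⟨b, hb⟩ := h i (Finset.mem_of_mem_erase hi)
  have hbk : b ∈ C k :=
    mem_iInter₂.mp hb k (Finset.mem_erase.2 ⟨(Finset.ne_of_mem_erase hi).symm, hk⟩)
  obtain ⟨w, hw, hwu⟩ := exists_mem_segment_eq_of_le_of_le hφ (hA a ha) (hCk b hbk)
  refine ⟨w, mem_iInter₂.2 fun j hj => ⟨?_, hwu⟩⟩
  have hjs : j ∈ s := Finset.mem_of_mem_erase (Finset.mem_of_mem_erase hj)
  exact (hCv j hjs).segment_subset (mem_iInter₂.mp ha j (Finset.mem_of_mem_erase hj))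
    (mem_iInter₂.mp hb j (Finset.mem_erase.2 ⟨Finset.ne_of_mem_erase hj, hjs⟩)) hw

variable [LocallyConvexSpace ℝ E] [T2Space E]

theorem nonempty_biInter_of_convex_biUnion {ι : Type*} [DecidableEq ι] {s : Finset ι}
    (hs : 2 ≤ s.card) {C : ι → Set E} (hCc : ∀ i ∈ s, IsCompact (C i))
    (hCv : ∀ i ∈ s, Convex ℝ (C i)) (hU : Convex ℝ (⋃ i ∈ s, C i))
    (h : ∀ i ∈ s, (⋂ j ∈ s.erase i, C j).Nonempty) : (⋂ i ∈ s, C i).Nonempty := by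
  induction s using Finset.strongInduction generalizing C with
  | H s ih =>
  rcases hs.eq_or_lt with hs2 | hs3
  · obtain ⟨i, j, hij, rfl⟩ := Finset.card_eq_two.mp hs2.symm
    have hj := h i (by simp)
    have hi := h j (by simp)
    simp only [ne_eq, hij, not_false_eq_true, Finset.erase_insert_of_ne, Finset.erase_singleton,
      insert_empty_eq, Finset.mem_singleton, iInter_iInter_eq_left, Finset.erase_insert_eq_erase,
      Finset.erase_eq_of_notMem] at hi hj
    simp only [Finset.mem_insert, Finset.mem_singleton, forall_eq_or_imp, forall_eq,
      iUnion_iUnion_eq_or_left, iUnion_iUnion_eq_left, iInter_iInter_eq_or_left,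
      iInter_iInter_eq_left] at hCc hU ⊢
    exact hCc.1.isClosed.inter_nonempty_of_convex_union hCc.2.isClosed hU hi hj
  obtain ⟨k, hk⟩ := Finset.card_pos.mp (by omega : 0 < s.card)
  obtain ⟨j₀, hj₀⟩ := Finset.card_pos.mp (by rw [Finset.card_erase_of_mem hk]; omega)
  set A := ⋂ j ∈ s.erase k, C j
  have hsk : ⋂ i ∈ s, C i = C k ∩ A := by
    conv_lhs => rw [← Finset.insert_erase hk, Finset.set_biInter_insert]
  rw [hsk]
  by_contra hAk
  -- cut the family by a hyperplane strictly separating `A` from `C k`: the sets indexed by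
  -- `s.erase k` satisfy the hypotheses inside it, but a common point would lie in `A`
  have hAc : IsCompact A := (hCc j₀ (Finset.mem_of_mem_erase hj₀)).of_isClosed_subset
    (isClosed_biInter fun j hj => (hCc j (Finset.mem_of_mem_erase hj)).isClosed)
    (biInter_subset_of_mem hj₀)
  have hAv : Convex ℝ A := convex_iInter₂ fun j hj => hCv j (Finset.mem_of_mem_erase hj)
  obtain ⟨ℓ, u, v, hℓA, huv, hℓC⟩ := geometric_hahn_banach_compact_closed hAv hAc (hCv k hk)
    (hCc k hk).isClosed (disjoint_iff_inter_eq_empty.2 <| by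
      rwa [inter_comm, ← not_nonempty_iff_eq_empty])
  set P := {w | ℓ w = u}
  have hPc : IsClosed P := isClosed_eq ℓ.continuous continuous_const
  have hPv : Convex ℝ P := convex_hyperplane ℓ.toLinearMap.isLinear u
  have hCkP : C k ∩ P = ∅ := eq_empty_of_forall_notMem fun w ⟨hw, hwP⟩ =>
    (huv.trans (hℓC w hw)).ne' hwP
  have hUP : ⋃ i ∈ s.erase k, C i ∩ P = (⋃ i ∈ s, C i) ∩ P := by
    conv_rhs => rw [iUnion₂_inter, ← Finset.insert_erase hk, Finset.set_biUnion_insert, hCkP,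
      empty_union]
  obtain ⟨w, hw⟩ := ih (s.erase k) (Finset.erase_ssubset hk)
    (by rw [Finset.card_erase_of_mem hk]; omega) (C := fun i => C i ∩ P)
    (fun i hi => (hCc i (Finset.mem_of_mem_erase hi)).inter_right hPc)
    (fun i hi => (hCv i (Finset.mem_of_mem_erase hi)).inter hPv)
    (hUP ▸ hU.inter hPv)
    (nonempty_biInter_erase_inter_setOf_eq hCv h hk ℓ.continuous (fun a ha => (hℓA a ha).le)
      fun b hb => (huv.trans (hℓC b hb)).le)
  have hwA : w ∈ A := mem_iInter₂.2 fun j hj => (mem_iInter₂.mp hw j hj).1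
  exact (hℓA w hwA).ne (mem_iInter₂.mp hw j₀ hj₀).2

theorem nonempty_convexHull_inter_biInter_of_kkm {ι : Type*} [DecidableEq ι] {s : Finset ι}
    (hs : s.Nonempty) (a : ι → E) {C : ι → Set E} (hCc : ∀ i ∈ s, IsClosed (C i))
    (hCv : ∀ i ∈ s, Convex ℝ (C i)) (hkkm : ∀ t ⊆ s, convexHull ℝ (a '' t) ⊆ ⋃ i ∈ t, C i) :
    (convexHull ℝ (a '' s) ∩ ⋂ i ∈ s, C i).Nonempty := by
  induction s using Finset.strongInduction with
  | H s ih =>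
  rcases (Finset.one_le_card.2 hs).eq_or_lt with hs1 | hs2
  · obtain ⟨i, rfl⟩ := Finset.card_eq_one.mp hs1.symm
    have hai : a i ∈ convexHull ℝ (a '' ↑({i} : Finset ι)) := subset_convexHull ℝ _ (by simp)
    exact ⟨a i, hai, by simpa using hkkm {i} subset_rfl hai⟩
  set K := convexHull ℝ (a '' s)
  have hKc : IsCompact K := (s.finite_toSet.image a).isCompact_convexHull ℝ
  obtain ⟨w, hw⟩ := nonempty_biInter_of_convex_biUnion hs2 (C := fun i => C i ∩ K)
    (fun i hi => hKc.inter_left (hCc i hi)) (fun i hi => (hCv i hi).inter (convex_convexHull ℝ _))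
    (by rw [← iUnion₂_inter, inter_eq_right.2 (hkkm s subset_rfl)]; exact convex_convexHull ℝ _)
    (fun i hi => by
      obtain ⟨w, hwK, hwC⟩ := ih (s.erase i) (Finset.erase_ssubset hi)
        (Finset.card_pos.mp (by rw [Finset.card_erase_of_mem hi]; omega))
        (fun j hj => hCc j (Finset.mem_of_mem_erase hj))
        (fun j hj => hCv j (Finset.mem_of_mem_erase hj))
        (fun t ht => hkkm t (ht.trans (Finset.erase_subset i s)))
      refine ⟨w, mem_iInter₂.2 fun j hj => ⟨mem_iInter₂.mp hwC j hj, ?_⟩⟩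
      exact convexHull_mono (image_mono (Finset.coe_subset.2 (Finset.erase_subset i s))) hwK)
  obtain ⟨i, hi⟩ := hs
  exact ⟨w, (mem_iInter₂.mp hw i hi).2, mem_iInter₂.2 fun j hj => (mem_iInter₂.mp hw j hj).1⟩

end Berge

section Hilbert

variable {H : Type*} [NormedAddCommGroup H] [InnerProductSpace ℝ H] [CompleteSpace H]

theorem Convex.exists_norm_sub_sq_add_norm_sq_le {K : Set H} (hKv : Convex ℝ K) (hKc : IsClosed K)
    (hK : K.Nonempty) : ∃ v ∈ K, ∀ w ∈ K, ‖w - v‖ ^ 2 + ‖v‖ ^ 2 ≤ ‖w‖ ^ 2 := by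
  obtain ⟨v, hv, hmin⟩ := exists_norm_eq_iInf_of_complete_convex hK hKc.isComplete hKv 0
  refine ⟨v, hv, fun w hw => ?_⟩
  have hvar := (norm_eq_iInf_iff_real_inner_le_zero hKv hv).1 hmin w hw
  rw [zero_sub, inner_neg_left, neg_nonpos, real_inner_comm] at hvar
  have h := norm_add_sq_real (w - v) v
  rw [sub_add_cancel] at h
  linarith

theorem nonempty_iInter_of_isClosed_of_convex_of_isBounded {ι : Type*} {K : ι → Set H}
    (hKc : ∀ i, IsClosed (K i)) (hKv : ∀ i, Convex ℝ (K i))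
    (hK : ∀ s : Finset ι, (⋂ i ∈ s, K i).Nonempty) {i₀ : ι} (hb : Bornology.IsBounded (K i₀)) :
    (⋂ i, K i).Nonempty := by
  classical
  choose p hpK hp using fun s : Finset ι => Convex.exists_norm_sub_sq_add_norm_sq_le
    (convex_iInter₂ fun i _ => hKv i) (isClosed_biInter fun i _ => hKc i) (hK s)
  have hsub : ∀ {s t : Finset ι}, s ⊆ t → p t ∈ ⋂ i ∈ s, K i := fun hst =>
    biInter_subset_biInter_left (fun i hi => hst hi) (hpK _)
  have hdist : ∀ {s t : Finset ι}, s ⊆ t → dist (p t) (p s) ^ 2 ≤ ‖p t‖ ^ 2 - ‖p s‖ ^ 2 :=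
    fun hst => by rw [dist_eq_norm]; linarith [hp _ _ (hsub hst)]
  obtain ⟨R, hR⟩ := hb.exists_norm_le
  have hbdd : BddAbove (range fun s => ‖p s‖ ^ 2) := by
    refine ⟨R ^ 2, forall_mem_range.2 fun s => ?_⟩
    have h := hdist (Finset.subset_insert i₀ s)
    have hR' := hR _ (mem_iInter₂.mp (hpK (insert i₀ s)) i₀ (Finset.mem_insert_self i₀ s))
    nlinarith [sq_nonneg (dist (p (insert i₀ s)) (p s)), norm_nonneg (p (insert i₀ s))]
  -- `‖p s‖ ^ 2` increases with `s` and is bounded, and `hdist` turns this into a Cauchy net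
  have hcauchy : CauchySeq p := by
    refine Metric.cauchySeq_iff'.2 fun ε hε => ?_
    obtain ⟨s, hs⟩ := exists_lt_of_lt_ciSup (sub_lt_self (⨆ s, ‖p s‖ ^ 2) (pow_pos hε 2))
    refine ⟨s, fun t hst => ?_⟩
    have h := hdist hst
    have := le_ciSup hbdd t
    nlinarith [dist_nonneg (x := p t) (y := p s)]
  obtain ⟨z, hz⟩ := cauchySeq_tendsto_of_complete hcauchy
  exact ⟨z, mem_iInter.2 fun i => (hKc i).mem_of_tendsto hz <|
    (eventually_ge_atTop {i}).mono fun s hs =>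
      mem_iInter₂.mp (hpK s) i (Finset.singleton_subset_iff.1 hs)⟩

end Hilbert

section Minty

variable {H : Type*} [NormedAddCommGroup H] [InnerProductSpace ℝ H]
  {E : Set H} {f : H → H → ℝ} {r : ℝ} {x : H}

theorem convexOn_univ_inner_sub_sub (x y : H) : ConvexOn ℝ univ fun z : H => ⟪z - y, z - x⟫ := by
  refine ⟨convex_univ, fun p _ q _ a b ha hb hab => ?_⟩
  obtain rfl : b = 1 - a := by linarith
  have key : a • ⟪p - y, p - x⟫ + (1 - a) • ⟪q - y, q - x⟫
      - ⟪a • p + (1 - a) • q - y, a • p + (1 - a) • q - x⟫ = a * (1 - a) * ⟪p - q, p - q⟫ := by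
    simp only [smul_eq_mul, inner_sub_left, inner_sub_right, inner_add_left, inner_add_right,
      real_inner_smul_left, real_inner_smul_right, real_inner_comm p q]
    ring
  nlinarith [mul_nonneg (mul_nonneg ha hb) (real_inner_self_nonneg (x := p - q))]

theorem convexOn_inner_sub_left (hE : Convex ℝ E) (z v : H) :
    ConvexOn ℝ E fun y : H => ⟪y - z, v⟫ := by
  refine ⟨hE, fun p _ q _ a b _ _ hab => le_of_eq ?_⟩
  simp only [smul_eq_mul, inner_sub_left, inner_add_left, real_inner_smul_left]
  linear_combination ⟪z, v⟫ * hab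

def mintySet (E : Set H) (f : H → H → ℝ) (r : ℝ) (x y : H) : Set H :=
  {z ∈ E | r * f y z + ⟪z - y, z - x⟫ ≤ 0}

theorem isClosed_mintySet (hE : IsClosed E) (hr : 0 ≤ r) {y : H}
    (hf : LowerSemicontinuousOn (f y) E) : IsClosed (mintySet E f r x y) := by
  have hlsc : LowerSemicontinuousOn (fun z => r * f y z + ⟪z - y, z - x⟫) E :=
    ((continuous_const_mul r).comp_lowerSemicontinuousOn hf (monotone_mul_left_of_nonneg hr)).add
      (Continuous.continuousOn (by fun_prop)).lowerSemicontinuousOn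
  obtain ⟨v, hv, hEv⟩ := lowerSemicontinuousOn_iff_preimage_Iic.1 hlsc 0
  change IsClosed (E ∩ (fun z => r * f y z + ⟪z - y, z - x⟫) ⁻¹' Iic 0)
  rw [hEv]
  exact hE.inter hv

theorem convex_mintySet (hr : 0 ≤ r) {y : H} (hf : ConvexOn ℝ E (f y)) :
    Convex ℝ (mintySet E f r x y) :=
  ((hf.smul hr).add ((convexOn_univ_inner_sub_sub x y).subset (subset_univ E) hf.1)).convex_le 0

theorem isBounded_mintySet (hr : 0 ≤ r) {y : H} (hy : y ∈ E) (hfy : f y y = 0)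
    (hf : ConvexOn ℝ E (f y)) (hlsc : LowerSemicontinuousOn (f y) E) :
    Bornology.IsBounded (mintySet E f r x y) := by
  obtain ⟨a, ha⟩ := hf.exists_sub_one_sub_mul_norm_le hy (hlsc y hy)
  refine (Metric.isBounded_iff_subset_closedBall y).2 ⟨‖y - x‖ + r * |a| + r + 1, ?_⟩
  rintro z ⟨hzE, hz⟩
  rw [Metric.mem_closedBall, dist_eq_norm]
  have hfz := ha z hzE
  rw [hfy] at hfz
  have hinner : ⟪z - y, z - x⟫ = ‖z - y‖ ^ 2 + ⟪z - y, y - x⟫ := by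
    rw [← real_inner_self_eq_norm_sq, ← inner_add_right, sub_add_sub_cancel]
  have hcs := neg_le_of_abs_le (abs_real_inner_le_norm (z - y) (y - x))
  have ha' : a * ‖z - y‖ ≤ |a| * ‖z - y‖ :=
    mul_le_mul_of_nonneg_right (le_abs_self a) (norm_nonneg _)
  have hquad : ‖z - y‖ ^ 2 ≤ (‖y - x‖ + r * |a|) * ‖z - y‖ + r := by
    nlinarith [mul_le_mul_of_nonneg_left hfz hr, mul_le_mul_of_nonneg_left ha' hr]
  by_contra! hlt
  have hB : 0 ≤ ‖y - x‖ + r * |a| := by positivity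
  nlinarith [mul_lt_mul_of_pos_left hlt (by linarith : 0 < ‖z - y‖),
    mul_le_mul_of_nonneg_left (by linarith : 1 ≤ ‖z - y‖) (by linarith : 0 ≤ r + 1)]

theorem convexHull_subset_biUnion_mintySet (hE : Convex ℝ E) (hr : 0 ≤ r)
    (hA1 : ∀ y ∈ E, f y y = 0) (hA2 : ∀ y ∈ E, ∀ z ∈ E, f y z + f z y ≤ 0)
    (hA4c : ∀ y ∈ E, ConvexOn ℝ E (f y)) (t : Finset E) :
    convexHull ℝ ((↑) '' (t : Set E)) ⊆ ⋃ y ∈ t, mintySet E f r x y := by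
  intro z hz
  have hzE : z ∈ E := convexHull_min (by rintro _ ⟨y, -, rfl⟩; exact y.2) hE hz
  by_contra hzC
  simp only [mem_iUnion, not_exists] at hzC
  have hψ : ConvexOn ℝ E fun y => r * f z y + ⟪y - z, z - x⟫ :=
    ((hA4c z hzE).smul hr).add (convexOn_inner_sub_left hE z (z - x))
  have hneg : (↑) '' (t : Set E) ⊆ {y ∈ E | r * f z y + ⟪y - z, z - x⟫ < 0} := by
    rintro _ ⟨y, hy, rfl⟩
    have hyC : ¬ r * f y z + ⟪z - y, z - x⟫ ≤ 0 := fun h => hzC y hy ⟨hzE, h⟩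
    have hswap : ⟪(y : H) - z, z - x⟫ = -⟪z - y, z - x⟫ := by rw [← inner_neg_left, neg_sub]
    refine ⟨y.2, ?_⟩
    nlinarith [mul_le_mul_of_nonneg_left (hA2 y y.2 z hzE) hr]
  have := (convexHull_min hneg (hψ.convex_lt 0) hz).2
  simp [hA1 z hzE] at this

theorem nonempty_biInter_mintySet (hEc : IsClosed E) (hE : Convex ℝ E) (hr : 0 ≤ r)
    (hA1 : ∀ y ∈ E, f y y = 0) (hA2 : ∀ y ∈ E, ∀ z ∈ E, f y z + f z y ≤ 0)
    (hA4c : ∀ y ∈ E, ConvexOn ℝ E (f y)) (hA4l : ∀ y ∈ E, LowerSemicontinuousOn (f y) E)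
    (s : Finset E) : (⋂ y ∈ s, mintySet E f r x y).Nonempty := by
  classical
  rcases s.eq_empty_or_nonempty with rfl | hs
  · simp
  exact (nonempty_convexHull_inter_biInter_of_kkm hs Subtype.val
    (fun y _ => isClosed_mintySet hEc hr (hA4l y y.2)) (fun y _ => convex_mintySet hr (hA4c y y.2))
    (fun t _ => convexHull_subset_biUnion_mintySet hE hr hA1 hA2 hA4c t)).mono inter_subset_right

theorem sub_one_mul_le_of_mem_mintySet (hr : 0 < r) {y z : H} {t : ℝ} (ht0 : 0 < t) (ht1 : t ≤ 1)
    (hy : y ∈ E) (hz : z ∈ E) (hfw : f (t • y + (1 - t) • z) (t • y + (1 - t) • z) = 0)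
    (hconv : ConvexOn ℝ E (f (t • y + (1 - t) • z)))
    (hzC : z ∈ mintySet E f r x (t • y + (1 - t) • z)) :
    (t - 1) * (⟪y - z, z - x⟫ / r) ≤ f (t • y + (1 - t) • z) y := by
  set w := t • y + (1 - t) • z
  have hJensen : f w w ≤ t * f w y + (1 - t) * f w z := hconv.2 hy hz ht0.le (by linarith) (by ring)
  have hzw : ⟪z - w, z - x⟫ = -(t * ⟪y - z, z - x⟫) := by
    rw [show z - w = -(t • (y - z)) by module, inner_neg_left, real_inner_smul_left]
  have hC := hzC.2
  rw [hzw] at hC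
  rw [hfw] at hJensen
  rw [mul_div_assoc', div_le_iff₀ hr]
  nlinarith [mul_le_mul_of_nonneg_left hC (by linarith : 0 ≤ 1 - t)]

theorem le_of_forall_mem_mintySet (hE : Convex ℝ E) (hr : 0 < r) {y z : H} (hy : y ∈ E)
    (hz : z ∈ E) (hA1 : ∀ w ∈ E, f w w = 0) (hA2 : ∀ w ∈ E, f w y + f y w ≤ 0)
    (hA3 : limsup (fun t : ℝ => f (t • y + (1 - t) • z) y) (𝓝[>] 0) ≤ f z y)
    (hA4c : ∀ w ∈ E, ConvexOn ℝ E (f w)) (hA4l : LowerSemicontinuousOn (f y) E)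
    (hzC : ∀ w ∈ E, z ∈ mintySet E f r x w) :
    0 ≤ f z y + (1 / r) * ⟪y - z, z - x⟫ := by
  set c := ⟪y - z, z - x⟫
  have hw : ∀ t ∈ Ioo (0 : ℝ) 1, t • y + (1 - t) • z ∈ E := fun t ht =>
    hE hy hz ht.1.le (by linarith [ht.2]) (by ring)
  obtain ⟨a, ha⟩ := (hA4c y hy).exists_sub_one_sub_mul_norm_le hy (hA4l y hy)
  -- a real `limsup` is a junk value unless the function is bounded above; here
  -- `f (w, y) ≤ -f (y, w)` and the linear lower bound of `f y` bound it
  have hbdd : IsBoundedUnder (· ≤ ·) (𝓝[>] 0) fun t : ℝ => f (t • y + (1 - t) • z) y := by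
    refine isBoundedUnder_of_eventually_le (a := 1 + |a| * ‖z - y‖) ?_
    filter_upwards [Ioo_mem_nhdsGT one_pos] with t ht
    have hwy : ‖t • y + (1 - t) • z - y‖ ≤ ‖z - y‖ := by
      rw [show t • y + (1 - t) • z - y = (1 - t) • (z - y) by module, norm_smul,
        Real.norm_of_nonneg (by linarith [ht.2])]
      exact mul_le_of_le_one_left (norm_nonneg _) (by linarith [ht.1])
    have hfyw := ha _ (hw t ht)
    rw [hA1 y hy] at hfyw
    linarith [hA2 _ (hw t ht), mul_le_mul_of_nonneg_left hwy (abs_nonneg a),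
      mul_le_mul_of_nonneg_right (le_abs_self a) (norm_nonneg (t • y + (1 - t) • z - y))]
  have hlim : Tendsto (fun t : ℝ => (t - 1) * (c / r)) (𝓝[>] 0) (𝓝 (-(c / r))) :=
    tendsto_nhdsWithin_of_tendsto_nhds <| by
      simpa using ((continuous_id.sub continuous_const).mul continuous_const).tendsto (0 : ℝ)
        (f := fun t : ℝ => (t - 1) * (c / r))
  have hlow : -(c / r) ≤ f z y := calc
    -(c / r) = limsup (fun t : ℝ => (t - 1) * (c / r)) (𝓝[>] 0) := hlim.limsup_eq.symm
    _ ≤ limsup (fun t : ℝ => f (t • y + (1 - t) • z) y) (𝓝[>] 0) := by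
      refine limsup_le_limsup ?_ hlim.isBoundedUnder_ge.isCoboundedUnder_le hbdd
      filter_upwards [Ioo_mem_nhdsGT one_pos] with t ht
      exact sub_one_mul_le_of_mem_mintySet hr ht.1 ht.2.le hy hz (hA1 _ (hw t ht))
        (hA4c _ (hw t ht)) (hzC _ (hw t ht))
    _ ≤ f z y := hA3
  rw [one_div_mul_eq_div]
  linarith

end Minty

/-- Lemma 2.3: existence of a solution of the regularized equilibrium problem. -/
theorem stmt_6
    {H : Type*} [NormedAddCommGroup H] [InnerProductSpace ℝ H] [CompleteSpace H]
    (E : Set H) (hEne : E.Nonempty) (hEcl : IsClosed E) (hEco : Convex ℝ E)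
    (f : H → H → ℝ)
    (hA1 : ∀ x ∈ E, f x x = 0)
    (hA2 : ∀ x ∈ E, ∀ y ∈ E, f x y + f y x ≤ 0)
    (hA3 : ∀ x ∈ E, ∀ y ∈ E, ∀ z ∈ E,
      Filter.limsup (fun t : ℝ => f (t • z + (1 - t) • x) y) (nhdsWithin 0 (Set.Ioi 0)) ≤ f x y)
    (hA4c : ∀ x ∈ E, ConvexOn ℝ E (f x))
    (hA4l : ∀ x ∈ E, LowerSemicontinuousOn (f x) E)
    (r : ℝ) (hr : 0 < r) (x : H) :
    ∃ z ∈ E, ∀ y ∈ E, 0 ≤ f z y + (1 / r) * ⟪y - z, z - x⟫ := by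
  obtain ⟨y₀, hy₀⟩ := hEne
  obtain ⟨z, hz⟩ := nonempty_iInter_of_isClosed_of_convex_of_isBounded
    (K := fun y : E => mintySet E f r x y)
    (fun y => isClosed_mintySet hEcl hr.le (hA4l y y.2))
    (fun y => convex_mintySet hr.le (hA4c y y.2))
    (nonempty_biInter_mintySet hEcl hEco hr.le hA1 hA2 hA4c hA4l) (i₀ := ⟨y₀, hy₀⟩)
    (isBounded_mintySet hr.le hy₀ (hA1 y₀ hy₀) (hA4c y₀ hy₀) (hA4l y₀ hy₀))
  have hzC : ∀ y ∈ E, z ∈ mintySet E f r x y := fun y hy => mem_iInter.1 hz ⟨y, hy⟩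
  have hzE : z ∈ E := (hzC y₀ hy₀).1
  exact ⟨z, hzE, fun y hy => le_of_forall_mem_mintySet hEco hr hy hzE hA1
    (fun w hw => hA2 w hw y hy) (hA3 z hzE y hy y hy) hA4c (hA4l y hy) hzC⟩
end

section
/- Let H be a real Hilbert space, E a nonempty closed convex subset of H, and f : E × E → ℝ a bifunction satisfying conditions (A1)–(A4). Let r > 0 and x ∈ H. If z, z' ∈ E both satisfy f(z, y) + (1/r)⟨y − z, z − x⟩ ≥ 0 for all y ∈ E and f(z', y) + (1/r)⟨y − z', z' − x⟩ ≥ 0 for all y ∈ E, then z = z'. (That is, the resolvent T_r(x) = {z ∈ E : f(z,y) + (1/r)⟨y − z, z − x⟩ ≥ 0 for all y ∈ E} is single-valued.) -/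
open Filter RealInnerProductSpace
open scoped Topology

/-- Lemma 2.4 (i): the resolvent T_r is single-valued. -/
theorem stmt_7
    {H : Type*} [NormedAddCommGroup H] [InnerProductSpace ℝ H] [CompleteSpace H]
    (E : Set H) (hEne : E.Nonempty) (hEcl : IsClosed E) (hEco : Convex ℝ E)
    (f : H → H → ℝ)
    (hA1 : ∀ x ∈ E, f x x = 0)
    (hA2 : ∀ x ∈ E, ∀ y ∈ E, f x y + f y x ≤ 0)
    (hA3 : ∀ x ∈ E, ∀ y ∈ E, ∀ z ∈ E,
      Filter.limsup (fun t : ℝ => f (t • z + (1 - t) • x) y) (nhdsWithin 0 (Set.Ioi 0)) ≤ f x y)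
    (hA4c : ∀ x ∈ E, ConvexOn ℝ E (f x))
    (hA4l : ∀ x ∈ E, LowerSemicontinuousOn (f x) E)
    (r : ℝ) (hr : 0 < r) (x : H)
    (z z' : H) (hz : z ∈ E) (hz' : z' ∈ E)
    (h : ∀ y ∈ E, 0 ≤ f z y + (1 / r) * ⟪y - z, z - x⟫)
    (h' : ∀ y ∈ E, 0 ≤ f z' y + (1 / r) * ⟪y - z', z' - x⟫) :
    z = z' := by
  have h1 := h z' hz'
  have h2 := h' z hz
  have hm := hA2 z hz z' hz'
  have key : 0 ≤ (1 / r) * (⟪z' - z, z - x⟫ + ⟪z - z', z' - x⟫) := by nlinarith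
  have hin : ⟪z' - z, z - x⟫ + ⟪z - z', z' - x⟫ = -⟪z - z', z - z'⟫ := by
    rw [show (z' - z : H) = -(z - z') from (neg_sub z z').symm, inner_neg_left,
      show (z - x : H) = (z - z') + (z' - x) by abel, inner_add_right]
    ring
  rw [hin] at key
  have hr' : 0 < 1 / r := by positivity
  have hnn : (0:ℝ) ≤ ⟪z - z', z - z'⟫ := real_inner_self_nonneg
  have : ⟪z - z', z - z'⟫ = 0 := by nlinarith
  have := inner_self_eq_zero.mp this
  have : z - z' = 0 := this
  exact sub_eq_zero.mp this
end

section
/- Let H be a real Hilbert space, E a nonempty closed convex subset of H, and f : E × E → ℝ a bifunction satisfying conditions (A1)–(A4). Let r > 0 and x, x' ∈ H, and suppose z, z' ∈ E satisfy f(z, y) + (1/r)⟨y − z, z − x⟩ ≥ 0 for all y ∈ E and f(z', y) + (1/r)⟨y − z', z' − x'⟩ ≥ 0 for all y ∈ E. Then ‖z − z'‖² ≤ ⟨z − z', x − x'⟩. (That is, the resolvent T_r is firmly nonexpansive.) -/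
open RealInnerProductSpace

/-
Test the inequality for z at y = z' and the one for z' at y = z and add them: by monotonicity
f(z, z') + f(z', z) ≤ 0, so ⟪z' - z, z - x⟫ + ⟪z - z', z' - x'⟫ ≥ 0, which rearranges to the claim.
-/

lemma inner_sub_add_inner_sub_eq {H : Type*} [NormedAddCommGroup H] [InnerProductSpace ℝ H]
    (x x' z z' : H) :
    ⟪z' - z, z - x⟫ + ⟪z - z', z' - x'⟫ = ⟪z - z', x - x'⟫ - ‖z - z'‖ ^ 2 := by
  rw [← real_inner_self_eq_norm_sq]
  simp only [inner_sub_left, inner_sub_right]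
  linarith [real_inner_comm z z', real_inner_comm z x, real_inner_comm z' x,
    real_inner_comm z x', real_inner_comm z' x']

theorem stmt_8_general
    {H : Type*} [NormedAddCommGroup H] [InnerProductSpace ℝ H]
    (E : Set H)
    (f : H → H → ℝ)
    (hA2 : ∀ x ∈ E, ∀ y ∈ E, f x y + f y x ≤ 0)
    (r : ℝ) (hr : 0 < r) (x x' : H)
    (z z' : H) (hz : z ∈ E) (hz' : z' ∈ E)
    (h : ∀ y ∈ E, 0 ≤ f z y + (1 / r) * ⟪y - z, z - x⟫)
    (h' : ∀ y ∈ E, 0 ≤ f z' y + (1 / r) * ⟪y - z', z' - x'⟫) :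
    ‖z - z'‖ ^ 2 ≤ ⟪z - z', x - x'⟫ := by
  have hsum : 0 ≤ (1 / r) * (⟪z' - z, z - x⟫ + ⟪z - z', z' - x'⟫) := by
    linarith [h z' hz', h' z hz, hA2 z hz z' hz']
  have hinner : 0 ≤ ⟪z' - z, z - x⟫ + ⟪z - z', z' - x'⟫ :=
    nonneg_of_mul_nonneg_right hsum (one_div_pos.mpr hr)
  linarith [inner_sub_add_inner_sub_eq x x' z z']

/-- Lemma 2.4 (ii): the resolvent T_r is firmly nonexpansive. -/
theorem stmt_8
    {H : Type*} [NormedAddCommGroup H] [InnerProductSpace ℝ H] [CompleteSpace H]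
    (E : Set H) (hEne : E.Nonempty) (hEcl : IsClosed E) (hEco : Convex ℝ E)
    (f : H → H → ℝ)
    (hA1 : ∀ x ∈ E, f x x = 0)
    (hA2 : ∀ x ∈ E, ∀ y ∈ E, f x y + f y x ≤ 0)
    (hA3 : ∀ x ∈ E, ∀ y ∈ E, ∀ z ∈ E,
      Filter.limsup (fun t : ℝ => f (t • z + (1 - t) • x) y) (nhdsWithin 0 (Set.Ioi 0)) ≤ f x y)
    (hA4c : ∀ x ∈ E, ConvexOn ℝ E (f x))
    (hA4l : ∀ x ∈ E, LowerSemicontinuousOn (f x) E)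
    (r : ℝ) (hr : 0 < r) (x x' : H)
    (z z' : H) (hz : z ∈ E) (hz' : z' ∈ E)
    (h : ∀ y ∈ E, 0 ≤ f z y + (1 / r) * ⟪y - z, z - x⟫)
    (h' : ∀ y ∈ E, 0 ≤ f z' y + (1 / r) * ⟪y - z', z' - x'⟫) :
    ‖z - z'‖ ^ 2 ≤ ⟪z - z', x - x'⟫ :=
  stmt_8_general E f hA2 r hr x x' z z' hz hz' h h'
end

section
/- Let H be a real Hilbert space, E a nonempty closed convex subset of H, and f : E × E → ℝ a bifunction satisfying conditions (A1)–(A4). Then the solution set EP(f) = {x ∈ E : f(x,y) ≥ 0 for all y ∈ E} is a closed and convex subset of H. -/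
open Filter RealInnerProductSpace
open scoped Topology

/-- Sublevel sets of a lower semicontinuous function on a closed set are closed. -/
lemma aux_closed_sublevel {H : Type*} [TopologicalSpace H] (E : Set H) (hEcl : IsClosed E)
    (g : H → ℝ) (hg : LowerSemicontinuousOn g E) : IsClosed {x ∈ E | g x ≤ 0} := by
  rw [isClosed_iff_clusterPt]
  intro x hx
  have hxE : x ∈ E := by
    apply isClosed_iff_clusterPt.mp hEcl x
    exact hx.mono (le_principal_iff.mpr (mem_principal.mpr (by intro z hz; exact hz.1)))
  refine ⟨hxE, ?_⟩
  by_contra h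
  push_neg at h
  have hlsc := hg x hxE 0 h
  have hne : (𝓝[{x ∈ E | g x ≤ 0}] x).NeBot := hx
  have hmono : 𝓝[{x ∈ E | g x ≤ 0}] x ≤ 𝓝[E] x :=
    nhdsWithin_mono x (fun z hz => hz.1)
  have h1 : ∀ᶠ z in 𝓝[{x ∈ E | g x ≤ 0}] x, 0 < g z := hmono hlsc
  have h2 : ∀ᶠ z in 𝓝[{x ∈ E | g x ≤ 0}] x, g z ≤ 0 :=
    eventually_mem_nhdsWithin.mono (fun z hz => hz.2)
  obtain ⟨z, hz1, hz2⟩ := (h1.and h2).exists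
  linarith

/-- Lemma 2.4 (iv): the solution set EP(f) is closed and convex. -/
theorem stmt_10
    {H : Type*} [NormedAddCommGroup H] [InnerProductSpace ℝ H] [CompleteSpace H]
    (E : Set H) (hEne : E.Nonempty) (hEcl : IsClosed E) (hEco : Convex ℝ E)
    (f : H → H → ℝ)
    (hA1 : ∀ x ∈ E, f x x = 0)
    (hA2 : ∀ x ∈ E, ∀ y ∈ E, f x y + f y x ≤ 0)
    (hA3 : ∀ x ∈ E, ∀ y ∈ E, ∀ z ∈ E,
      Filter.limsup (fun t : ℝ => f (t • z + (1 - t) • x) y) (nhdsWithin 0 (Set.Ioi 0)) ≤ f x y)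
    (hA4c : ∀ x ∈ E, ConvexOn ℝ E (f x))
    (hA4l : ∀ x ∈ E, LowerSemicontinuousOn (f x) E) :
    IsClosed {x ∈ E | ∀ y ∈ E, 0 ≤ f x y} ∧ Convex ℝ {x ∈ E | ∀ y ∈ E, 0 ≤ f x y} := by
  -- Minty reformulation
  have hset : {x ∈ E | ∀ y ∈ E, 0 ≤ f x y} = ⋂ y ∈ E, {x ∈ E | f y x ≤ 0} := by
    ext x
    simp only [Set.mem_setOf_eq, Set.mem_iInter]
    constructor
    · rintro ⟨hxE, hx⟩ y hy
      exact ⟨hxE, by have := hA2 x hxE y hy; have := hx y hy; linarith⟩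
    · intro hx
      obtain ⟨y₀, hy₀⟩ := hEne
      have hxE : x ∈ E := (hx y₀ hy₀).1
      refine ⟨hxE, fun y hy => ?_⟩
      -- eventually for small t > 0, f(ty+(1-t)x, y) ≥ 0
      have hev : ∀ᶠ t in 𝓝[>] (0:ℝ), 0 ≤ f (t • y + (1 - t) • x) y := by
        have h1 : ∀ᶠ t in 𝓝[>] (0:ℝ), t < 1 :=
          eventually_nhdsWithin_of_eventually_nhds (eventually_lt_nhds (by norm_num))
        filter_upwards [h1, eventually_mem_nhdsWithin] with t ht1 ht0
        have ht0' : (0:ℝ) < t := ht0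
        set z := t • y + (1 - t) • x with hz
        have hzE : z ∈ E := hEco hy hxE ht0'.le (sub_nonneg.mpr ht1.le) (by ring)
        have hconv := (hA4c z hzE).2 hy hxE ht0'.le (sub_nonneg.mpr ht1.le) (by ring)
        have hzz : f z z = 0 := hA1 z hzE
        have hzx : f z x ≤ 0 := (hx z hzE).2
        simp only [smul_eq_mul] at hconv
        rw [← hz] at hconv
        rw [hzz] at hconv
        nlinarith
      -- hence 0 ≤ limsup ≤ f x y
      have hlimsup : (0:ℝ) ≤ Filter.limsup (fun t : ℝ => f (t • y + (1 - t) • x) y)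
          (nhdsWithin 0 (Set.Ioi 0)) := by
        rw [Filter.limsup_eq]
        rcases Set.eq_empty_or_nonempty
            {a | ∀ᶠ t in 𝓝[>] (0:ℝ), f (t • y + (1 - t) • x) y ≤ a} with hS | hS
        · rw [hS, Real.sInf_empty]
        · refine le_csInf hS (fun b hb => ?_)
          obtain ⟨t, ht1, ht2⟩ := (hev.and hb).exists
          linarith
      exact le_trans hlimsup (hA3 x hxE y hy y hy)
  rw [hset]
  constructor
  · exact isClosed_biInter (fun y hy => aux_closed_sublevel E hEcl (f y) (hA4l y hy))
  · exact convex_iInter₂ (fun y hy => (hA4c y hy).convex_le 0)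
end

section
/- Let H be a real Hilbert space, E a nonempty closed convex subset of H, and f : E × E → ℝ a bifunction satisfying conditions (A1)–(A4). Let S : H → H be an (α, β)-generalized hybrid mapping with F(S) ∩ EP(f) ≠ ∅. Let a ∈ (0,1] with 0 < a ≤ α_n ≤ 1 for all n, {r_n} ⊂ (0,∞) with liminf_{n→∞} r_n > 0, and {β_n} ⊂ [b,1] for some b ∈ (0,1) with liminf_{n→∞} β_n(1−β_n) > 0. Let x_1 ∈ H and let {x_n} ⊂ H, {u_n} ⊂ E, {y_n} ⊂ H satisfy for all n: f(u_n, y) + (1/r_n)⟨y − u_n, u_n − x_n⟩ ≥ 0 for all y ∈ E; y_n = (1−β_n)x_n + β_n S u_n; x_{n+1} = (1−α_n)x_n + α_n S y_n. Then for every q ∈ F(S) ∩ EP(f) the limit lim_{n→∞} ‖x_n − q‖ exists (in particular {x_n} and {y_n} are bounded), and ‖x_n − S u_n‖ → 0 as n → ∞. -/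
open Filter RealInnerProductSpace
open scoped Topology

lemma aux_convex_sq {H : Type*} [NormedAddCommGroup H] [InnerProductSpace ℝ H]
    (v w : H) (t : ℝ) :
    ‖(1 - t) • v + t • w‖ ^ 2 = (1 - t) * ‖v‖ ^ 2 + t * ‖w‖ ^ 2 - t * (1 - t) * ‖v - w‖ ^ 2 := by
  have h : ∀ z : H, ‖z‖ ^ 2 = ⟪z, z⟫ := fun z => (real_inner_self_eq_norm_sq z).symm
  rw [h, h, h, h]
  simp only [inner_add_left, inner_add_right, inner_sub_left, inner_sub_right,
    real_inner_smul_left, real_inner_smul_right]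
  rw [real_inner_comm w v]
  ring

/-- For the modified Ishikawa iteration: lim ‖x_n − q‖ exists for every
q ∈ F(S) ∩ EP(f) (in particular {x_n} and {y_n} are bounded), and
‖x_n − S u_n‖ → 0. -/
theorem stmt_13
    {H : Type*} [NormedAddCommGroup H] [InnerProductSpace ℝ H] [CompleteSpace H]
    (E : Set H) (hEne : E.Nonempty) (hEcl : IsClosed E) (hEco : Convex ℝ E)
    (f : H → H → ℝ)
    (hA1 : ∀ x ∈ E, f x x = 0)
    (hA2 : ∀ x ∈ E, ∀ y ∈ E, f x y + f y x ≤ 0)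
    (hA3 : ∀ x ∈ E, ∀ y ∈ E, ∀ z ∈ E,
      Filter.limsup (fun t : ℝ => f (t • z + (1 - t) • x) y) (nhdsWithin 0 (Set.Ioi 0)) ≤ f x y)
    (hA4c : ∀ x ∈ E, ConvexOn ℝ E (f x))
    (hA4l : ∀ x ∈ E, LowerSemicontinuousOn (f x) E)
    (S : H → H) (α β : ℝ)
    (hS : ∀ x y : H,
      α * ‖S x - S y‖ ^ 2 + (1 - α) * ‖x - S y‖ ^ 2 ≤
        β * ‖S x - y‖ ^ 2 + (1 - β) * ‖x - y‖ ^ 2)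
    (K : Set H)
    (hK : K = {z : H | S z = z} ∩ {z ∈ E | ∀ w ∈ E, 0 ≤ f z w})
    (hKne : K.Nonempty)
    (a : ℝ) (ha : 0 < a) (ha1 : a ≤ 1)
    (αs : ℕ → ℝ) (hαs : ∀ n, a ≤ αs n ∧ αs n ≤ 1)
    (r : ℕ → ℝ) (hr : ∀ n, 0 < r n) (hrinf : 0 < Filter.liminf r Filter.atTop)
    (b : ℝ) (hb : 0 < b) (hb1 : b < 1)
    (βs : ℕ → ℝ) (hβs : ∀ n, b ≤ βs n ∧ βs n ≤ 1)
    (hβinf : 0 < Filter.liminf (fun n => βs n * (1 - βs n)) Filter.atTop)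
    (x u y : ℕ → H)
    (hu : ∀ n, u n ∈ E)
    (hueq : ∀ n, ∀ w ∈ E, 0 ≤ f (u n) w + (1 / r n) * ⟪w - u n, u n - x n⟫)
    (hy : ∀ n, y n = (1 - βs n) • x n + βs n • S (u n))
    (hx : ∀ n, x (n + 1) = (1 - αs n) • x n + αs n • S (y n)) :
    (∀ q ∈ K, ∃ l : ℝ, Filter.Tendsto (fun n => ‖x n - q‖) Filter.atTop (𝓝 l)) ∧
    Bornology.IsBounded (Set.range x) ∧
    Bornology.IsBounded (Set.range y) ∧
    Filter.Tendsto (fun n => ‖x n - S (u n)‖) Filter.atTop (𝓝 0) := by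
  have hKmem : ∀ q ∈ K, S q = q ∧ q ∈ E ∧ (∀ w ∈ E, 0 ≤ f q w) := by
    rw [hK]; rintro q ⟨h1, h2, h3⟩; exact ⟨h1, h2, h3⟩
  -- quasi-nonexpansiveness (squared) at any fixed point q
  have hQ : ∀ q ∈ K, ∀ z, ‖S z - q‖ ^ 2 ≤ ‖z - q‖ ^ 2 := by
    intro q hq z
    have hSq := (hKmem q hq).1
    have h := hS q z
    rw [hSq] at h
    rw [norm_sub_rev (S z) q, norm_sub_rev z q]
    nlinarith [h]
  -- resolvent estimate : ‖u n − q‖ ≤ ‖x n − q‖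
  have huq : ∀ q ∈ K, ∀ n, ‖u n - q‖ ≤ ‖x n - q‖ := by
    intro q hq n
    obtain ⟨hSq, hqE, hqEP⟩ := hKmem q hq
    have h1 := hueq n q hqE
    have h2 : f (u n) q ≤ 0 := by
      have ha2 := hA2 (u n) (hu n) q hqE
      have hep := hqEP (u n) (hu n)
      linarith
    have h3 : 0 ≤ ⟪q - u n, u n - x n⟫ := by
      have hrn := hr n
      have h4 : 0 ≤ (1 / r n) * ⟪q - u n, u n - x n⟫ := by linarith
      have h5 : ⟪q - u n, u n - x n⟫ = r n * ((1 / r n) * ⟪q - u n, u n - x n⟫) := by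
        field_simp
      rw [h5]
      exact mul_nonneg hrn.le h4
    have h4 : ⟪q - u n, u n - x n⟫ = ⟪u n - q, x n - q⟫ - ‖u n - q‖ ^ 2 := by
      rw [← real_inner_self_eq_norm_sq]
      simp only [inner_sub_left, inner_sub_right]
      ring
    have h5 : ⟪u n - q, x n - q⟫ ≤ ‖u n - q‖ * ‖x n - q‖ := real_inner_le_norm _ _
    nlinarith [norm_nonneg (u n - q), norm_nonneg (x n - q)]
  -- key squared inequality
  have hkey : ∀ q ∈ K, ∀ n,
      ‖x (n + 1) - q‖ ^ 2 ≤ ‖x n - q‖ ^ 2 - αs n * (βs n * (1 - βs n)) * ‖x n - S (u n)‖ ^ 2 := by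
    intro q hq n
    have e1 : x (n + 1) - q = (1 - αs n) • (x n - q) + αs n • (S (y n) - q) := by
      rw [hx n]; module
    have e2 : y n - q = (1 - βs n) • (x n - q) + βs n • (S (u n) - q) := by
      rw [hy n]; module
    have id1 := aux_convex_sq (x n - q) (S (y n) - q) (αs n)
    have id2 := aux_convex_sq (x n - q) (S (u n) - q) (βs n)
    have sub1 : x n - q - (S (y n) - q) = x n - S (y n) := by abel
    have sub2 : x n - q - (S (u n) - q) = x n - S (u n) := by abel
    rw [sub1] at id1
    rw [sub2] at id2
    rw [e1, id1]
    have hB := hQ q hq (y n)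
    rw [e2, id2] at hB
    have hD := hQ q hq (u n)
    have hU := huq q hq n
    have hU2 : ‖u n - q‖ ^ 2 ≤ ‖x n - q‖ ^ 2 := by
      nlinarith [norm_nonneg (u n - q), norm_nonneg (x n - q)]
    have hα1 := (hαs n).1
    have hα2 := (hαs n).2
    have hβ1 := (hβs n).1
    have hβ2 := (hβs n).2
    have hαpos : 0 < αs n := lt_of_lt_of_le ha hα1
    have hβpos : 0 < βs n := lt_of_lt_of_le hb hβ1
    nlinarith [sq_nonneg ‖x n - S (y n)‖, sq_nonneg ‖x n - S (u n)‖,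
      mul_nonneg hαpos.le (sub_nonneg.mpr hB),
      mul_nonneg (mul_nonneg hαpos.le hβpos.le)
        (sub_nonneg.mpr (le_trans hD hU2)),
      mul_nonneg (mul_nonneg hαpos.le (sub_nonneg.mpr hα2)) (sq_nonneg ‖x n - S (y n)‖)]
  have hZnn : ∀ n, (0:ℝ) ≤ αs n * (βs n * (1 - βs n)) * ‖x n - S (u n)‖ ^ 2 := by
    intro n
    have hα1 := (hαs n).1
    have hβ1 := (hβs n).1
    have hβ2 := (hβs n).2
    have : 0 ≤ αs n := le_trans ha.le hα1
    exact mul_nonneg (mul_nonneg this (mul_nonneg (le_trans hb.le hβ1)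
      (sub_nonneg.mpr hβ2))) (sq_nonneg _)
  -- monotone decreasing
  have hmono : ∀ q ∈ K, Antitone fun n => ‖x n - q‖ := by
    intro q hq
    apply antitone_nat_of_succ_le
    intro n
    have h1 := hkey q hq n
    have h2 := hZnn n
    nlinarith [norm_nonneg (x (n + 1) - q), norm_nonneg (x n - q)]
  -- part 1 : limits exist
  have part1 : ∀ q ∈ K, ∃ l : ℝ, Tendsto (fun n => ‖x n - q‖) atTop (𝓝 l) := by
    intro q hq
    refine ⟨_, tendsto_atTop_ciInf (hmono q hq) ⟨0, ?_⟩⟩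
    rintro z ⟨n, rfl⟩
    exact norm_nonneg _
  obtain ⟨q₀, hq₀⟩ := hKne
  -- boundedness
  have hxb : ∀ n, ‖x n - q₀‖ ≤ ‖x 0 - q₀‖ := fun n => hmono q₀ hq₀ (Nat.zero_le n)
  have hyb : ∀ n, ‖y n - q₀‖ ≤ ‖x 0 - q₀‖ := by
    intro n
    have e2 : y n - q₀ = (1 - βs n) • (x n - q₀) + βs n • (S (u n) - q₀) := by
      rw [hy n]; module
    have hβ1 := (hβs n).1
    have hβ2 := (hβs n).2
    have h1 : ‖y n - q₀‖ ≤ (1 - βs n) * ‖x n - q₀‖ + βs n * ‖S (u n) - q₀‖ := by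
      rw [e2]
      refine le_trans (norm_add_le _ _) ?_
      rw [norm_smul, norm_smul, Real.norm_eq_abs, Real.norm_eq_abs,
        abs_of_nonneg (by linarith), abs_of_nonneg (by linarith)]
    have hD := hQ q₀ hq₀ (u n)
    have hU := huq q₀ hq₀ n
    have hSu : ‖S (u n) - q₀‖ ≤ ‖x n - q₀‖ := by
      nlinarith [norm_nonneg (S (u n) - q₀), norm_nonneg (u n - q₀), norm_nonneg (x n - q₀)]
    calc ‖y n - q₀‖ ≤ (1 - βs n) * ‖x n - q₀‖ + βs n * ‖S (u n) - q₀‖ := h1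
      _ ≤ ‖x n - q₀‖ := by nlinarith
      _ ≤ ‖x 0 - q₀‖ := hxb n
  have hxbdd : Bornology.IsBounded (Set.range x) := by
    apply (Metric.isBounded_closedBall (x := q₀) (r := ‖x 0 - q₀‖)).subset
    rintro z ⟨n, rfl⟩
    rw [Metric.mem_closedBall, dist_eq_norm]
    exact hxb n
  have hybdd : Bornology.IsBounded (Set.range y) := by
    apply (Metric.isBounded_closedBall (x := q₀) (r := ‖x 0 - q₀‖)).subset
    rintro z ⟨n, rfl⟩
    rw [Metric.mem_closedBall, dist_eq_norm]
    exact hyb n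
  refine ⟨part1, hxbdd, hybdd, ?_⟩
  -- the difference of squared distances tends to 0
  obtain ⟨l, hl⟩ := part1 q₀ hq₀
  have hD : Tendsto (fun n => ‖x n - q₀‖ ^ 2) atTop (𝓝 (l ^ 2)) := hl.pow 2
  have hD' : Tendsto (fun n => ‖x (n + 1) - q₀‖ ^ 2) atTop (𝓝 (l ^ 2)) :=
    hD.comp (tendsto_add_atTop_nat 1)
  have hdiff : Tendsto (fun n => ‖x n - q₀‖ ^ 2 - ‖x (n + 1) - q₀‖ ^ 2) atTop (𝓝 0) := by
    have := hD.sub hD'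
    rwa [sub_self] at this
  -- eventual lower bound on βs n * (1 - βs n)
  set c := Filter.liminf (fun n => βs n * (1 - βs n)) Filter.atTop with hc
  have hcb : ∀ᶠ n in atTop, c / 2 < βs n * (1 - βs n) := by
    refine Filter.eventually_lt_of_lt_liminf (half_lt_self hβinf) ?_
    exact Filter.isBoundedUnder_of
      ⟨0, fun n => mul_nonneg (le_trans hb.le (hβs n).1) (sub_nonneg.mpr (hβs n).2)⟩
  have hc2 : 0 < a * (c / 2) := mul_pos ha (half_pos hβinf)
  -- squeeze for the squared norm
  have hsq : Tendsto (fun n => ‖x n - S (u n)‖ ^ 2) atTop (𝓝 0) := by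
    have hub : ∀ᶠ n in atTop, ‖x n - S (u n)‖ ^ 2 ≤
        (1 / (a * (c / 2))) * (‖x n - q₀‖ ^ 2 - ‖x (n + 1) - q₀‖ ^ 2) := by
      filter_upwards [hcb] with n hn
      have h1 := hkey q₀ hq₀ n
      have hα1 := (hαs n).1
      have hαnn : 0 ≤ αs n := le_trans ha.le hα1
      have hZ : a * (c / 2) * ‖x n - S (u n)‖ ^ 2 ≤
          αs n * (βs n * (1 - βs n)) * ‖x n - S (u n)‖ ^ 2 :=
        mul_le_mul_of_nonneg_right
          (mul_le_mul hα1 hn.le (half_pos hβinf).le hαnn) (sq_nonneg _)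
      have h2 : a * (c / 2) * ‖x n - S (u n)‖ ^ 2 ≤
          ‖x n - q₀‖ ^ 2 - ‖x (n + 1) - q₀‖ ^ 2 := by linarith
      rw [one_div, ← div_eq_inv_mul, le_div_iff₀ hc2]
      linarith [h2]
    have hlim : Tendsto (fun n => (1 / (a * (c / 2))) *
        (‖x n - q₀‖ ^ 2 - ‖x (n + 1) - q₀‖ ^ 2)) atTop (𝓝 0) := by
      have := hdiff.const_mul (1 / (a * (c / 2)))
      rwa [mul_zero] at this
    exact squeeze_zero' (Filter.Eventually.of_forall fun n => sq_nonneg _) hub hlim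
  -- conclude for the norm itself
  have h2 : Tendsto (fun n => Real.sqrt (‖x n - S (u n)‖ ^ 2)) atTop (𝓝 (Real.sqrt 0)) :=
    (Real.continuous_sqrt.tendsto 0).comp hsq
  have h3 : (fun n => Real.sqrt (‖x n - S (u n)‖ ^ 2)) = fun n => ‖x n - S (u n)‖ :=
    funext fun n => Real.sqrt_sq (norm_nonneg _)
  rw [h3, Real.sqrt_zero] at h2
  exact h2
end

section
/- Let H be a real Hilbert space, E a nonempty closed convex subset of H, and f : E × E → ℝ a bifunction satisfying conditions (A1)–(A4). Let S : H → H be an (α, β)-generalized hybrid mapping with F(S) ∩ EP(f) ≠ ∅. Let a ∈ (0,1] with 0 < a ≤ α_n ≤ 1 for all n, {r_n} ⊂ (0,∞) with liminf_{n→∞} r_n > 0, and {β_n} ⊂ [b,1] for some b ∈ (0,1) with liminf_{n→∞} β_n(1−β_n) > 0. Let x_1 ∈ H and let {x_n} ⊂ H, {u_n} ⊂ E, {y_n} ⊂ H satisfy for all n: f(u_n, y) + (1/r_n)⟨y − u_n, u_n − x_n⟩ ≥ 0 for all y ∈ E; y_n = (1−β_n)x_n + β_n S u_n; x_{n+1}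 = (1−α_n)x_n + α_n S y_n. Then ‖x_n − u_n‖ → 0 and ‖u_n − S u_n‖ → 0 as n → ∞. -/
open Filter RealInnerProductSpace
open scoped Topology

lemma cvx_id0 {H : Type*} [NormedAddCommGroup H] [InnerProductSpace ℝ H]
    (t : ℝ) (A B : H) :
    ‖(1 - t) • A + t • B‖ ^ 2
      = (1 - t) * ‖A‖ ^ 2 + t * ‖B‖ ^ 2 - t * (1 - t) * ‖A - B‖ ^ 2 := by
  rw [norm_add_sq_real, norm_sub_sq_real, norm_smul, norm_smul,
    real_inner_smul_left, real_inner_smul_right, Real.norm_eq_abs, Real.norm_eq_abs,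
    mul_pow, mul_pow, sq_abs, sq_abs]
  ring

lemma cvx_id {H : Type*} [NormedAddCommGroup H] [InnerProductSpace ℝ H]
    (t : ℝ) (p q z : H) :
    ‖(1 - t) • p + t • q - z‖ ^ 2
      = (1 - t) * ‖p - z‖ ^ 2 + t * ‖q - z‖ ^ 2 - t * (1 - t) * ‖p - q‖ ^ 2 := by
  have h : (1 - t) • p + t • q - z = (1 - t) • (p - z) + t • (q - z) := by
    module
  have hpq : p - q = (p - z) - (q - z) := by abel
  rw [h, cvx_id0, ← hpq]

set_option maxHeartbeats 800000 in
/-- For the modified Ishikawa iteration: ‖x_n − u_n‖ → 0 and ‖u_n − S u_n‖ → 0. -/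
theorem stmt_14
    {H : Type*} [NormedAddCommGroup H] [InnerProductSpace ℝ H] [CompleteSpace H]
    (E : Set H) (hEne : E.Nonempty) (hEcl : IsClosed E) (hEco : Convex ℝ E)
    (f : H → H → ℝ)
    (hA1 : ∀ x ∈ E, f x x = 0)
    (hA2 : ∀ x ∈ E, ∀ y ∈ E, f x y + f y x ≤ 0)
    (hA3 : ∀ x ∈ E, ∀ y ∈ E, ∀ z ∈ E,
      Filter.limsup (fun t : ℝ => f (t • z + (1 - t) • x) y) (nhdsWithin 0 (Set.Ioi 0)) ≤ f x y)
    (hA4c : ∀ x ∈ E, ConvexOn ℝ E (f x))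
    (hA4l : ∀ x ∈ E, LowerSemicontinuousOn (f x) E)
    (S : H → H) (α β : ℝ)
    (hS : ∀ x y : H,
      α * ‖S x - S y‖ ^ 2 + (1 - α) * ‖x - S y‖ ^ 2 ≤
        β * ‖S x - y‖ ^ 2 + (1 - β) * ‖x - y‖ ^ 2)
    (K : Set H)
    (hK : K = {z : H | S z = z} ∩ {z ∈ E | ∀ w ∈ E, 0 ≤ f z w})
    (hKne : K.Nonempty)
    (a : ℝ) (ha : 0 < a) (ha1 : a ≤ 1)
    (αs : ℕ → ℝ) (hαs : ∀ n, a ≤ αs n ∧ αs n ≤ 1)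
    (r : ℕ → ℝ) (hr : ∀ n, 0 < r n) (hrinf : 0 < Filter.liminf r Filter.atTop)
    (b : ℝ) (hb : 0 < b) (hb1 : b < 1)
    (βs : ℕ → ℝ) (hβs : ∀ n, b ≤ βs n ∧ βs n ≤ 1)
    (hβinf : 0 < Filter.liminf (fun n => βs n * (1 - βs n)) Filter.atTop)
    (x u y : ℕ → H)
    (hu : ∀ n, u n ∈ E)
    (hueq : ∀ n, ∀ w ∈ E, 0 ≤ f (u n) w + (1 / r n) * ⟪w - u n, u n - x n⟫)
    (hy : ∀ n, y n = (1 - βs n) • x n + βs n • S (u n))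
    (hx : ∀ n, x (n + 1) = (1 - αs n) • x n + αs n • S (y n)) :
    Filter.Tendsto (fun n => ‖x n - u n‖) Filter.atTop (𝓝 0) ∧
    Filter.Tendsto (fun n => ‖u n - S (u n)‖) Filter.atTop (𝓝 0) := by
  obtain ⟨z, hzK⟩ := hKne
  rw [hK] at hzK
  obtain ⟨hz1, hz2, hz3⟩ := hzK
  simp only [Set.mem_setOf_eq] at hz1 hz2 hz3
  -- quasi-nonexpansiveness
  have qne : ∀ w : H, ‖S w - z‖ ^ 2 ≤ ‖w - z‖ ^ 2 := by
    intro w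
    have h := hS z w
    rw [hz1] at h
    have h1 : ‖S w - z‖ = ‖z - S w‖ := norm_sub_rev _ _
    have h2 : ‖w - z‖ = ‖z - w‖ := norm_sub_rev _ _
    rw [h1, h2]; nlinarith [h]
  -- resolvent-type inequality
  have hun : ∀ n, ‖u n - z‖ ^ 2 + ‖x n - u n‖ ^ 2 ≤ ‖x n - z‖ ^ 2 := by
    intro n
    have h0 := hueq n z hz2
    have h1 : f (u n) z ≤ 0 := by
      have := hA2 (u n) (hu n) z hz2
      have := hz3 (u n) (hu n)
      linarith
    have h2 : (0:ℝ) ≤ ⟪z - u n, u n - x n⟫ := by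
      by_contra hc
      push_neg at hc
      have : (1 / r n) * ⟪z - u n, u n - x n⟫ < 0 :=
        mul_neg_of_pos_of_neg (one_div_pos.mpr (hr n)) hc
      linarith
    have h3 : ⟪x n - u n, u n - z⟫ = ⟪z - u n, u n - x n⟫ := by
      simp only [inner_sub_left, inner_sub_right]
      rw [real_inner_comm (x n) (u n), real_inner_comm (x n) z, real_inner_comm (u n) z]
      ring
    have h4 : x n - z = (x n - u n) + (u n - z) := by abel
    rw [h4, norm_add_sq_real]
    nlinarith [h2, h3]
  set d : ℕ → ℝ := fun n => ‖x n - z‖ ^ 2 with hd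
  -- key decrease inequality
  have key : ∀ n, a * b * ‖x n - u n‖ ^ 2
      + a * (βs n * (1 - βs n)) * ‖x n - S (u n)‖ ^ 2 ≤ d n - d (n + 1) := by
    intro n
    obtain ⟨hα1, hα2⟩ := hαs n
    obtain ⟨hβ1, hβ2⟩ := hβs n
    have hβ0 : (0:ℝ) ≤ βs n := le_trans hb.le hβ1
    have hα0 : (0:ℝ) ≤ αs n := le_trans ha.le hα1
    have hββ : (0:ℝ) ≤ βs n * (1 - βs n) := mul_nonneg hβ0 (by linarith)
    have hyid : ‖y n - z‖ ^ 2 = (1 - βs n) * ‖x n - z‖ ^ 2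
        + βs n * ‖S (u n) - z‖ ^ 2 - βs n * (1 - βs n) * ‖x n - S (u n)‖ ^ 2 := by
      rw [hy n]; exact cvx_id _ _ _ _
    have hxid : d (n + 1) = (1 - αs n) * ‖x n - z‖ ^ 2
        + αs n * ‖S (y n) - z‖ ^ 2 - αs n * (1 - αs n) * ‖x n - S (y n)‖ ^ 2 := by
      rw [hd]; simp only; rw [hx n]; exact cvx_id _ _ _ _
    have q1 := qne (u n)
    have q2 := qne (y n)
    have h5 := hun n
    -- E1 : ‖y n − z‖² ≤ d n − βs n * ‖x−u‖² − βs n (1−βs n) ‖x−Su‖²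
    have e1 : ‖y n - z‖ ^ 2 ≤ ‖x n - z‖ ^ 2 - βs n * ‖x n - u n‖ ^ 2
        - βs n * (1 - βs n) * ‖x n - S (u n)‖ ^ 2 := by
      have := mul_le_mul_of_nonneg_left (le_trans q1 (by linarith : ‖u n - z‖ ^ 2 ≤ ‖x n - z‖ ^ 2 - ‖x n - u n‖ ^ 2)) hβ0
      nlinarith [hyid]
    have e2 : d (n + 1) ≤ (1 - αs n) * ‖x n - z‖ ^ 2 + αs n * ‖y n - z‖ ^ 2 := by
      have hnn : (0:ℝ) ≤ αs n * (1 - αs n) * ‖x n - S (y n)‖ ^ 2 :=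
        mul_nonneg (mul_nonneg hα0 (by linarith)) (sq_nonneg _)
      have := mul_le_mul_of_nonneg_left q2 hα0
      linarith [hxid]
    have e3 := mul_le_mul_of_nonneg_left e1 hα0
    have h6 : a * b * ‖x n - u n‖ ^ 2 ≤ αs n * βs n * ‖x n - u n‖ ^ 2 := by
      have hab : a * b ≤ αs n * βs n :=
        mul_le_mul hα1 hβ1 hb.le hα0
      exact mul_le_mul_of_nonneg_right hab (sq_nonneg _)
    have h7 : a * (βs n * (1 - βs n)) * ‖x n - S (u n)‖ ^ 2
        ≤ αs n * (βs n * (1 - βs n)) * ‖x n - S (u n)‖ ^ 2 := by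
      have : a * (βs n * (1 - βs n)) ≤ αs n * (βs n * (1 - βs n)) :=
        mul_le_mul_of_nonneg_right hα1 hββ
      exact mul_le_mul_of_nonneg_right this (sq_nonneg _)
    have hdn : d n = ‖x n - z‖ ^ 2 := rfl
    nlinarith [e2, e3, h6, h7]
  have hterm1 : ∀ n, (0:ℝ) ≤ a * b * ‖x n - u n‖ ^ 2 := fun n =>
    mul_nonneg (mul_nonneg ha.le hb.le) (sq_nonneg _)
  have hterm2 : ∀ n, (0:ℝ) ≤ a * (βs n * (1 - βs n)) * ‖x n - S (u n)‖ ^ 2 := fun n =>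
    mul_nonneg (mul_nonneg ha.le
      (mul_nonneg (le_trans hb.le (hβs n).1) (by linarith [(hβs n).2]))) (sq_nonneg _)
  have hanti : Antitone d := by
    refine antitone_nat_of_succ_le fun n => ?_
    linarith [key n, hterm1 n, hterm2 n]
  have hbdd : BddBelow (Set.range d) := ⟨0, by rintro _ ⟨n, rfl⟩; positivity⟩
  have hdlim : Tendsto d atTop (𝓝 (⨅ n, d n)) := tendsto_atTop_ciInf hanti hbdd
  have hdiff : Tendsto (fun n => d n - d (n + 1)) atTop (𝓝 0) := by
    have h2 : Tendsto (fun n => d (n + 1)) atTop (𝓝 (⨅ n, d n)) :=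
      hdlim.comp (tendsto_add_atTop_nat 1)
    simpa using hdlim.sub h2
  -- first limit
  have hxu2 : Tendsto (fun n => ‖x n - u n‖ ^ 2) atTop (𝓝 0) := by
    have hsq : Tendsto (fun n => a * b * ‖x n - u n‖ ^ 2) atTop (𝓝 0) := by
      refine squeeze_zero (fun n => hterm1 n) (fun n => ?_) hdiff
      linarith [key n, hterm2 n]
    have hab : (0:ℝ) < a * b := mul_pos ha hb
    have h2 := hsq.const_mul (a * b)⁻¹
    have heq : ∀ n, (a * b)⁻¹ * (a * b * ‖x n - u n‖ ^ 2) = ‖x n - u n‖ ^ 2 := fun n => by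
      field_simp
    simpa only [heq, mul_zero] using h2
  have hxu : Tendsto (fun n => ‖x n - u n‖) atTop (𝓝 0) := by
    have h := hxu2.sqrt
    rw [Real.sqrt_zero] at h
    exact h.congr fun n => Real.sqrt_sq (norm_nonneg _)
  refine ⟨hxu, ?_⟩
  -- second: ‖x n − S u n‖ → 0
  have hcb : IsBoundedUnder (· ≥ ·) atTop (fun n => βs n * (1 - βs n)) :=
    isBoundedUnder_of ⟨0, fun n =>
      mul_nonneg (le_trans hb.le (hβs n).1) (by linarith [(hβs n).2])⟩
  set c := Filter.liminf (fun n => βs n * (1 - βs n)) Filter.atTop with hc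
  have hev : ∀ᶠ n in atTop, c / 2 < βs n * (1 - βs n) :=
    eventually_lt_of_lt_liminf (by linarith) hcb
  have hxSu2 : Tendsto (fun n => ‖x n - S (u n)‖ ^ 2) atTop (𝓝 0) := by
    have hsq : Tendsto (fun n => a * (c / 2) * ‖x n - S (u n)‖ ^ 2) atTop (𝓝 0) := by
      refine squeeze_zero_norm' ?_ hdiff
      filter_upwards [hev] with n hn
      have h1 : a * (c / 2) * ‖x n - S (u n)‖ ^ 2
          ≤ a * (βs n * (1 - βs n)) * ‖x n - S (u n)‖ ^ 2 := by
        have : a * (c / 2) ≤ a * (βs n * (1 - βs n)) :=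
          mul_le_mul_of_nonneg_left hn.le ha.le
        exact mul_le_mul_of_nonneg_right this (sq_nonneg _)
      have h2 : (0:ℝ) ≤ a * (c / 2) * ‖x n - S (u n)‖ ^ 2 :=
        mul_nonneg (mul_nonneg ha.le (by linarith)) (sq_nonneg _)
      rw [Real.norm_eq_abs, abs_of_nonneg h2]
      linarith [key n, hterm1 n]
    have hac : (0:ℝ) < a * (c / 2) := mul_pos ha (by linarith)
    have h2 := hsq.const_mul (a * (c / 2))⁻¹
    have heq : ∀ n, (a * (c / 2))⁻¹ * (a * (c / 2) * ‖x n - S (u n)‖ ^ 2)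
        = ‖x n - S (u n)‖ ^ 2 := fun n => by
      field_simp
    simpa only [heq, mul_zero] using h2
  have hxSu : Tendsto (fun n => ‖x n - S (u n)‖) atTop (𝓝 0) := by
    have h := hxSu2.sqrt
    rw [Real.sqrt_zero] at h
    exact h.congr fun n => Real.sqrt_sq (norm_nonneg _)
  -- triangle inequality
  have : Tendsto (fun n => ‖x n - u n‖ + ‖x n - S (u n)‖) atTop (𝓝 0) := by
    have h := hxu.add hxSu
    rw [add_zero] at h
    exact h
  refine squeeze_zero_norm (fun n => ?_) this
  rw [Real.norm_eq_abs, abs_of_nonneg (norm_nonneg _)]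
  calc ‖u n - S (u n)‖ = ‖(u n - x n) + (x n - S (u n))‖ := by congr 1; abel
    _ ≤ ‖u n - x n‖ + ‖x n - S (u n)‖ := norm_add_le _ _
    _ = ‖x n - u n‖ + ‖x n - S (u n)‖ := by rw [norm_sub_rev]
end

section
/- Let H be a real Hilbert space, E a nonempty closed convex subset of H, and f : E × E → ℝ a bifunction satisfying conditions (A1)–(A4). Let {x_n} ⊂ H, {u_n} ⊂ E and {r_n} ⊂ (0,∞) satisfy: f(u_n, y) + (1/r_n)⟨y − u_n, u_n − x_n⟩ ≥ 0 for all y ∈ E and all n, and ‖u_n − x_n‖/r_n → 0 as n → ∞. If a subsequence {u_{n_i}} converges weakly to a point u ∈ E, then u ∈ EP(f), i.e., f(u, y) ≥ 0 for all y ∈ E. -/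
open Filter RealInnerProductSpace
open scoped Topology

/-- A nonempty closed convex set in a real Hilbert space is weakly sequentially closed. -/
lemma weak_seq_closed_mem
    {H : Type*} [NormedAddCommGroup H] [InnerProductSpace ℝ H] [CompleteSpace H]
    {S : Set H} (hScl : IsClosed S) (hSco : Convex ℝ S) (hSne : S.Nonempty)
    {p : ℕ → H} (hp : ∀ j, p j ∈ S) {v : H}
    (hw : ∀ w : H, Filter.Tendsto (fun j => ⟪p j, w⟫) Filter.atTop (𝓝 ⟪v, w⟫)) :
    v ∈ S := by
  obtain ⟨q, hqS, hq⟩ :=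
    exists_norm_eq_iInf_of_complete_convex hSne (hScl.isComplete) hSco v
  have hchar : ∀ w ∈ S, ⟪v - q, w - q⟫ ≤ 0 :=
    (norm_eq_iInf_iff_real_inner_le_zero hSco hqS).mp hq
  have hle : ∀ j, ⟪p j, v - q⟫ ≤ ⟪q, v - q⟫ := by
    intro j
    have := hchar (p j) (hp j)
    rw [real_inner_comm] at this
    have h2 : ⟪p j - q, v - q⟫ = ⟪p j, v - q⟫ - ⟪q, v - q⟫ := by
      rw [inner_sub_left]
    linarith [this, h2.symm ▸ this]
  have hlim : ⟪v, v - q⟫ ≤ ⟪q, v - q⟫ :=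
    le_of_tendsto (hw (v - q)) (Filter.Eventually.of_forall hle)
  have : ⟪v - q, v - q⟫ ≤ 0 := by
    rw [inner_sub_left]; linarith
  have hvq : v - q = 0 := real_inner_self_nonpos.mp this
  have : v = q := by rwa [sub_eq_zero] at hvq
  rw [this]; exact hqS

/-- If u_n solves the regularized equilibrium problem at x_n, ‖u_n − x_n‖/r_n → 0,
and a subsequence of {u_n} converges weakly to u ∈ E, then u ∈ EP(f). -/
theorem stmt_15
    {H : Type*} [NormedAddCommGroup H] [InnerProductSpace ℝ H] [CompleteSpace H]
    (E : Set H) (hEne : E.Nonempty) (hEcl : IsClosed E) (hEco : Convex ℝ E)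
    (f : H → H → ℝ)
    (hA1 : ∀ x ∈ E, f x x = 0)
    (hA2 : ∀ x ∈ E, ∀ y ∈ E, f x y + f y x ≤ 0)
    (hA3 : ∀ x ∈ E, ∀ y ∈ E, ∀ z ∈ E,
      Filter.limsup (fun t : ℝ => f (t • z + (1 - t) • x) y) (nhdsWithin 0 (Set.Ioi 0)) ≤ f x y)
    (hA4c : ∀ x ∈ E, ConvexOn ℝ E (f x))
    (hA4l : ∀ x ∈ E, LowerSemicontinuousOn (f x) E)
    (x u : ℕ → H) (r : ℕ → ℝ) (hr : ∀ n, 0 < r n)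
    (hu : ∀ n, u n ∈ E)
    (hueq : ∀ n, ∀ w ∈ E, 0 ≤ f (u n) w + (1 / r n) * ⟪w - u n, u n - x n⟫)
    (hquot : Filter.Tendsto (fun n => ‖u n - x n‖ / r n) Filter.atTop (𝓝 0))
    (v : H) (hv : v ∈ E) (φ : ℕ → ℕ) (hφ : StrictMono φ)
    (hweak : ∀ w : H, Filter.Tendsto (fun j => ⟪u (φ j), w⟫) Filter.atTop (𝓝 ⟪v, w⟫)) :
    ∀ y ∈ E, 0 ≤ f v y := by
  -- Step A: the weakly convergent subsequence is norm bounded (Banach–Steinhaus)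
  obtain ⟨M, hM⟩ : ∃ M : ℝ, ∀ j, ‖u (φ j)‖ ≤ M := by
    obtain ⟨C, hC⟩ := banach_steinhaus (g := fun j => innerSL ℝ (u (φ j)))
      (fun w => by
        have hb : BddAbove (Set.range fun j => ‖⟪u (φ j), w⟫‖) :=
          ((hweak w).norm).bddAbove_range
        obtain ⟨C, hC⟩ := hb
        exact ⟨C, fun j => hC ⟨j, rfl⟩⟩)
    refine ⟨C, fun j => ?_⟩
    have := hC j
    rwa [innerSL_apply_norm] at this
  -- quotient along the subsequence tends to 0
  have hquotφ : Filter.Tendsto (fun j => ‖u (φ j) - x (φ j)‖ / r (φ j))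
      Filter.atTop (𝓝 0) := hquot.comp hφ.tendsto_atTop
  -- Step B+C: for every y ∈ E, f y v ≤ 0
  have key : ∀ y ∈ E, f y v ≤ 0 := by
    intro y hy
    -- f y (u n) ≤ ‖y - u n‖ * (‖u n - x n‖ / r n)
    have hbnd : ∀ n, f y (u n) ≤ ‖y - u n‖ * (‖u n - x n‖ / r n) := by
      intro n
      have h1 := hueq n y hy
      have h2 := hA2 (u n) (hu n) y hy
      have hcs : ⟪y - u n, u n - x n⟫ ≤ ‖y - u n‖ * ‖u n - x n‖ :=
        real_inner_le_norm _ _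
      have hrn := hr n
      have : f y (u n) ≤ (1 / r n) * ⟪y - u n, u n - x n⟫ := by linarith
      calc f y (u n) ≤ (1 / r n) * ⟪y - u n, u n - x n⟫ := this
        _ ≤ (1 / r n) * (‖y - u n‖ * ‖u n - x n‖) := by
            apply mul_le_mul_of_nonneg_left hcs
            positivity
        _ = ‖y - u n‖ * (‖u n - x n‖ / r n) := by rw [div_eq_mul_inv]; ring
    -- the bound along the subsequence tends to 0
    have htends : Filter.Tendsto
        (fun j => (‖y‖ + M) * (‖u (φ j) - x (φ j)‖ / r (φ j))) Filter.atTop (𝓝 0) := by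
      simpa using hquotφ.const_mul (‖y‖ + M)
    have hbnd2 : ∀ j, f y (u (φ j)) ≤ (‖y‖ + M) * (‖u (φ j) - x (φ j)‖ / r (φ j)) := by
      intro j
      refine le_trans (hbnd (φ j)) ?_
      apply mul_le_mul_of_nonneg_right _ (div_nonneg (norm_nonneg _) (hr _).le)
      calc ‖y - u (φ j)‖ ≤ ‖y‖ + ‖u (φ j)‖ := norm_sub_le _ _
        _ ≤ ‖y‖ + M := by linarith [hM j]
    -- suppose f y v > 0 for contradiction; sublevel set trick
    by_contra hpos
    push_neg at hpos
    set ε := f y v / 2 with hε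
    have hεpos : 0 < ε := by positivity
    -- eventually f y (u (φ j)) ≤ ε
    have hev : ∀ᶠ j in Filter.atTop, f y (u (φ j)) ≤ ε := by
      have := htends.eventually_le_const (by linarith : (0:ℝ) < ε)
      filter_upwards [this] with j hj
      exact le_trans (hbnd2 j) hj
    obtain ⟨N, hN⟩ := hev.exists_forall_of_atTop
    -- sublevel set
    set S : Set H := {z ∈ E | f y z ≤ ε} with hS
    have hScl : IsClosed S := by
      refine isClosed_of_closure_subset ?_
      intro z hz
      have hzE : z ∈ E := hEcl.closure_subset_iff.mpr
        (fun a (ha : a ∈ S) => ha.1) hz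
      refine ⟨hzE, ?_⟩
      by_contra hc
      push_neg at hc
      have h1 := hA4l y hy z hzE ε hc
      have hne : (nhdsWithin z S).NeBot := mem_closure_iff_nhdsWithin_neBot.mp hz
      have h2 : ∀ᶠ z' in nhdsWithin z S, ε < f y z' :=
        nhdsWithin_mono z (fun a (ha : a ∈ S) => ha.1) h1
      have h3 : ∀ᶠ z' in nhdsWithin z S, f y z' ≤ ε :=
        eventually_nhdsWithin_of_forall (fun a (ha : a ∈ S) => ha.2)
      obtain ⟨a, ha1, ha2⟩ := (h2.and h3).exists
      linarith
    have hSco : Convex ℝ S := by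
      intro a ha b hb s t hs ht hst
      refine ⟨hEco ha.1 hb.1 hs ht hst, ?_⟩
      calc f y (s • a + t • b) ≤ s * f y a + t * f y b :=
            (hA4c y hy).2 ha.1 hb.1 hs ht hst
        _ ≤ s * ε + t * ε := by
            apply add_le_add
            · exact mul_le_mul_of_nonneg_left ha.2 hs
            · exact mul_le_mul_of_nonneg_left hb.2 ht
        _ = ε := by rw [← add_mul, hst, one_mul]
    -- shifted subsequence lies in S and still converges weakly to v
    have hmem : ∀ j, u (φ (j + N)) ∈ S := fun j => ⟨hu _, hN (j + N) (by omega)⟩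
    have hw2 : ∀ w : H, Filter.Tendsto (fun j => ⟪u (φ (j + N)), w⟫) Filter.atTop (𝓝 ⟪v, w⟫) :=
      fun w => (hweak w).comp (tendsto_add_atTop_nat N)
    have hvS : v ∈ S := weak_seq_closed_mem hScl hSco ⟨_, hmem 0⟩ hmem hw2
    have : f y v ≤ ε := hvS.2
    linarith
  -- Step D: conclude via (A3)
  intro y hy
  have hsub : ∀ t : ℝ, 0 < t → t < 1 → 0 ≤ f (t • y + (1 - t) • v) y := by
    intro t ht0 ht1
    set z := t • y + (1 - t) • v with hz
    have hzE : z ∈ E := hEco hy hv ht0.le (by linarith) (by ring)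
    have hconv : f z z ≤ t * f z y + (1 - t) * f z v := by
      have := (hA4c z hzE).2 hy hv ht0.le (by linarith : (0:ℝ) ≤ 1 - t) (by ring)
      simpa using this
    have h0 : f z z = 0 := hA1 z hzE
    have hzv : f z v ≤ 0 := key z hzE
    nlinarith [hzv, hconv, h0]
  have hfreq : ∃ᶠ t : ℝ in nhdsWithin 0 (Set.Ioi 0),
      (0:ℝ) ≤ f (t • y + (1 - t) • v) y := by
    apply Filter.Eventually.frequently
    filter_upwards [Ioo_mem_nhdsGT_of_mem (by norm_num : (0:ℝ) ∈ Set.Ico 0 1)] with t ht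
    exact hsub t ht.1 ht.2
  by_cases hbdd : Filter.IsBoundedUnder (· ≤ ·) (nhdsWithin (0:ℝ) (Set.Ioi 0))
      (fun t : ℝ => f (t • y + (1 - t) • v) y)
  · exact le_trans (Filter.le_limsup_of_frequently_le hfreq hbdd) (hA3 v hv y hy y hy)
  · have hempty : {a : ℝ | ∀ᶠ t in nhdsWithin (0:ℝ) (Set.Ioi 0),
        f (t • y + (1 - t) • v) y ≤ a} = ∅ := by
      rw [Set.eq_empty_iff_forall_notMem]
      intro a ha
      exact hbdd ⟨a, ha⟩
    have : Filter.limsup (fun t : ℝ => f (t • y + (1 - t) • v) y)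
        (nhdsWithin 0 (Set.Ioi 0)) = 0 := by
      rw [Filter.limsup_eq, hempty, Real.sInf_empty]
    exact le_trans this.ge (hA3 v hv y hy y hy)
end

section
/- Let H be a real Hilbert space, E a nonempty closed convex subset of H, and S : E → H an (α, β)-generalized hybrid mapping. Let {u_n} be a bounded sequence in E such that ‖u_n − S u_n‖ → 0 as n → ∞ and {u_n} converges weakly to a point u ∈ E. Then Su = u, i.e., generalized hybrid mappings are demiclosed at zero along such sequences. -/
open Filter RealInnerProductSpace
open scoped Topology

private lemma aux_inner_tendsto {H : Type*} [NormedAddCommGroup H] [InnerProductSpace ℝ H]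
    (e w : ℕ → H) (K : ℝ) (hK : ∀ n, ‖w n‖ ≤ K)
    (he : Tendsto (fun n => ‖e n‖) atTop (𝓝 0)) :
    Tendsto (fun n => ⟪e n, w n⟫) atTop (𝓝 0) := by
  refine squeeze_zero_norm (fun n => ?_) (by simpa using he.mul_const K)
  exact (abs_real_inner_le_norm _ _).trans
    (mul_le_mul_of_nonneg_left (hK n) (norm_nonneg _))

/-- Demiclosedness at zero for (α, β)-generalized hybrid mappings: if {u_n} ⊂ E
is bounded, ‖u_n − S u_n‖ → 0 and u_n ⇀ u ∈ E, then S u = u. -/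
theorem stmt_16
    {H : Type*} [NormedAddCommGroup H] [InnerProductSpace ℝ H] [CompleteSpace H]
    (E : Set H) (hEne : E.Nonempty) (hEcl : IsClosed E) (hEco : Convex ℝ E)
    (S : H → H) (α β : ℝ)
    (hS : ∀ x ∈ E, ∀ y ∈ E,
      α * ‖S x - S y‖ ^ 2 + (1 - α) * ‖x - S y‖ ^ 2 ≤
        β * ‖S x - y‖ ^ 2 + (1 - β) * ‖x - y‖ ^ 2)
    (u : ℕ → H) (hu : ∀ n, u n ∈ E)
    (hbdd : Bornology.IsBounded (Set.range u))
    (hasym : Filter.Tendsto (fun n => ‖u n - S (u n)‖) Filter.atTop (𝓝 0))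
    (v : H) (hv : v ∈ E)
    (hweak : ∀ w : H, Filter.Tendsto (fun n => ⟪u n, w⟫) Filter.atTop (𝓝 ⟪v, w⟫)) :
    S v = v := by
  obtain ⟨C, hC⟩ := hbdd.exists_norm_le
  have hCn : ∀ n, ‖u n‖ ≤ C := fun n => hC _ (Set.mem_range_self n)
  set e : ℕ → H := fun n => S (u n) - u n with he_def
  have he : Tendsto (fun n => ‖e n‖) atTop (𝓝 0) := by
    simpa [he_def, norm_sub_rev] using hasym
  have key : ∀ n, ‖v - S v‖ ^ 2 + 2 * ⟪u n - v, v - S v⟫ ≤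
      β * (‖e n‖ ^ 2 + 2 * ⟪e n, u n - v⟫)
      - α * (‖e n‖ ^ 2 + 2 * ⟪e n, u n - S v⟫) := by
    intro n
    have h := hS (u n) (hu n) v hv
    have h1 : ‖S (u n) - S v‖ ^ 2
        = ‖e n‖ ^ 2 + 2 * ⟪e n, u n - S v⟫ + ‖u n - S v‖ ^ 2 := by
      have := norm_add_sq_real (e n) (u n - S v)
      rw [he_def] at this ⊢
      simp only [sub_add_sub_cancel] at this
      linarith
    have h2 : ‖S (u n) - v‖ ^ 2
        = ‖e n‖ ^ 2 + 2 * ⟪e n, u n - v⟫ + ‖u n - v‖ ^ 2 := by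
      have := norm_add_sq_real (e n) (u n - v)
      rw [he_def] at this ⊢
      simp only [sub_add_sub_cancel] at this
      linarith
    have h3 : ‖u n - S v‖ ^ 2
        = ‖u n - v‖ ^ 2 + 2 * ⟪u n - v, v - S v⟫ + ‖v - S v‖ ^ 2 := by
      have := norm_add_sq_real (u n - v) (v - S v)
      simp only [sub_add_sub_cancel] at this
      linarith
    rw [h1, h2, h3] at h
    nlinarith [h]
  have hL : Tendsto (fun n => ‖v - S v‖ ^ 2 + 2 * ⟪u n - v, v - S v⟫) atTop
      (𝓝 (‖v - S v‖ ^ 2)) := by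
    have : Tendsto (fun n => ⟪u n - v, v - S v⟫) atTop (𝓝 0) := by
      have := (hweak (v - S v)).sub_const ⟪v, v - S v⟫
      simp only [sub_self] at this
      simpa [inner_sub_left] using this
    have := ((this.const_mul 2).const_add (‖v - S v‖ ^ 2))
    simpa using this
  have hR : Tendsto (fun n => β * (‖e n‖ ^ 2 + 2 * ⟪e n, u n - v⟫)
      - α * (‖e n‖ ^ 2 + 2 * ⟪e n, u n - S v⟫)) atTop (𝓝 0) := by
    have hsq : Tendsto (fun n => ‖e n‖ ^ 2) atTop (𝓝 0) := by
      simpa [pow_two] using he.mul he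
    have hi1 : Tendsto (fun n => ⟪e n, u n - v⟫) atTop (𝓝 0) :=
      aux_inner_tendsto e _ (C + ‖v‖)
        (fun n => (norm_sub_le _ _).trans (by linarith [hCn n])) he
    have hi2 : Tendsto (fun n => ⟪e n, u n - S v⟫) atTop (𝓝 0) :=
      aux_inner_tendsto e _ (C + ‖S v‖)
        (fun n => (norm_sub_le _ _).trans (by linarith [hCn n])) he
    have := ((hsq.add (hi1.const_mul 2)).const_mul β).sub
      ((hsq.add (hi2.const_mul 2)).const_mul α)
    simpa using this
  have hle : ‖v - S v‖ ^ 2 ≤ 0 :=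
    le_of_tendsto_of_tendsto' hL hR key
  have : ‖v - S v‖ = 0 := by nlinarith [norm_nonneg (v - S v)]
  have := norm_eq_zero.mp this
  have := sub_eq_zero.mp this
  exact this.symm
end
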